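/- arXiv:2505.01193 — 8 statements merged into one kernel-verified Lean document; each statement's English description precedes it below -/
import Mathlib

section
/- Let h, ℓ > 1 and let the grid G(h,ℓ) be the graph on [h]×[ℓ] with edges between vertices at ℓ¹-distance 1. For every vertex set X of size at most h+1, if G(h,ℓ) \ X has two connected components each containing a full column of the grid, then there is at most one additional connected component, and it consists of a single vertex. -/
/-- The (h × ℓ)-grid: vertices `[h] × [ℓ]`, edges between vertices at
ℓ¹-distance 1. -/
def gridGraph (h ℓ : ℕ) : SimpleGraph (Fin h × Fin ℓ) :=
  SimpleGraph.fromRel (fun a b =>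
    ((a.1 : ℤ) - (b.1 : ℤ)).natAbs + ((a.2 : ℤ) - (b.2 : ℤ)).natAbs = 1)

/-- A connected component of `G(h,ℓ) \ X` is good if it contains a full
column of the grid. -/
def GoodComp {h ℓ : ℕ} (X : Set (Fin h × Fin ℓ))
    (c : ((gridGraph h ℓ).induce Xᶜ).ConnectedComponent) : Prop :=
  ∃ j : Fin ℓ, ∀ i : Fin h, ∃ hm : ((i, j) : Fin h × Fin ℓ) ∈ Xᶜ,
    ((gridGraph h ℓ).induce Xᶜ).connectedComponentMk ⟨(i, j), hm⟩ = c

set_option linter.unusedVariables false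

lemma grid_adj {h ℓ : ℕ} {a b : Fin h × Fin ℓ} (hne : a ≠ b)
    (hd : ((a.1 : ℤ) - (b.1 : ℤ)).natAbs + ((a.2 : ℤ) - (b.2 : ℤ)).natAbs = 1) :
    (gridGraph h ℓ).Adj a b := by
  unfold gridGraph
  rw [SimpleGraph.fromRel_adj]
  exact ⟨hne, Or.inl hd⟩

lemma induce_adj' {h ℓ : ℕ} {X : Set (Fin h × Fin ℓ)} {a b : Fin h × Fin ℓ}
    (ha : a ∈ Xᶜ) (hb : b ∈ Xᶜ) (hadj : (gridGraph h ℓ).Adj a b) :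
    ((gridGraph h ℓ).induce Xᶜ).Adj ⟨a, ha⟩ ⟨b, hb⟩ := by
  simp [SimpleGraph.comap]
  exact hadj

lemma horiz_reach {h ℓ : ℕ} (X : Set (Fin h × Fin ℓ)) (i : Fin h) :
    ∀ (n : ℕ) (a b : Fin ℓ), (b : ℕ) = (a : ℕ) + n →
    (∀ c : Fin ℓ, (a : ℕ) ≤ (c : ℕ) → (c : ℕ) ≤ (b : ℕ) → ((i, c) : Fin h × Fin ℓ) ∈ Xᶜ) →
    ∀ (ha : ((i, a) : Fin h × Fin ℓ) ∈ Xᶜ) (hb : ((i, b) : Fin h × Fin ℓ) ∈ Xᶜ),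
    ((gridGraph h ℓ).induce Xᶜ).Reachable ⟨(i, a), ha⟩ ⟨(i, b), hb⟩ := by
  intro n
  induction n with
  | zero =>
    intro a b hab _ ha hb
    have : a = b := Fin.ext (by omega)
    subst this
    rfl
  | succ n ih =>
    intro a b hab hfree ha hb
    have hb' : (a : ℕ) + n < ℓ := by have := b.isLt; omega
    set b' : Fin ℓ := ⟨(a : ℕ) + n, hb'⟩ with hbdef
    have hval : (b' : ℕ) = (a : ℕ) + n := rfl
    have hmb' : ((i, b') : Fin h × Fin ℓ) ∈ Xᶜ := hfree b' (by omega) (by omega)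
    have hr1 : ((gridGraph h ℓ).induce Xᶜ).Reachable ⟨(i, a), ha⟩ ⟨(i, b'), hmb'⟩ :=
      ih a b' rfl (fun c h1 h2 => hfree c h1 (by omega)) ha hmb'
    have hadj : (gridGraph h ℓ).Adj (i, b') (i, b) := by
      apply grid_adj
      · intro hcon
        have : (b' : ℕ) = (b : ℕ) := congrArg (fun p : Fin h × Fin ℓ => (p.2 : ℕ)) hcon
        omega
      · show ((i : ℤ) - (i : ℤ)).natAbs + ((b' : ℤ) - (b : ℤ)).natAbs = 1
        have h1 : ((i : ℤ) - (i : ℤ)).natAbs = 0 := by omega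
        have h2 : ((b' : ℤ) - (b : ℤ)).natAbs = 1 := by omega
        omega
    exact hr1.trans (induce_adj' hmb' hb hadj).reachable

lemma horiz_comp {h ℓ : ℕ} (X : Set (Fin h × Fin ℓ)) (i : Fin h) (a b : Fin ℓ)
    (hab : (a : ℕ) ≤ (b : ℕ))
    (hfree : ∀ c : Fin ℓ, (a : ℕ) ≤ (c : ℕ) → (c : ℕ) ≤ (b : ℕ) → ((i, c) : Fin h × Fin ℓ) ∈ Xᶜ)
    (ha : ((i, a) : Fin h × Fin ℓ) ∈ Xᶜ) (hb : ((i, b) : Fin h × Fin ℓ) ∈ Xᶜ) :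
    ((gridGraph h ℓ).induce Xᶜ).connectedComponentMk ⟨(i, a), ha⟩ =
    ((gridGraph h ℓ).induce Xᶜ).connectedComponentMk ⟨(i, b), hb⟩ :=
  SimpleGraph.ConnectedComponent.sound (horiz_reach X i ((b : ℕ) - (a : ℕ)) a b (by omega) hfree ha hb)

lemma blocker {h ℓ : ℕ} (X : Set (Fin h × Fin ℓ)) (i : Fin h) (a b : Fin ℓ)
    (hab : (a : ℕ) ≤ (b : ℕ))
    (ha : ((i, a) : Fin h × Fin ℓ) ∈ Xᶜ) (hb : ((i, b) : Fin h × Fin ℓ) ∈ Xᶜ)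
    (hne : ((gridGraph h ℓ).induce Xᶜ).connectedComponentMk ⟨(i, a), ha⟩ ≠
      ((gridGraph h ℓ).induce Xᶜ).connectedComponentMk ⟨(i, b), hb⟩) :
    ∃ c : Fin ℓ, (a : ℕ) < (c : ℕ) ∧ (c : ℕ) < (b : ℕ) ∧ ((i, c) : Fin h × Fin ℓ) ∈ X := by
  by_contra hcon
  push_neg at hcon
  apply hne
  apply horiz_comp X i a b hab
  intro c h1 h2
  rcases eq_or_lt_of_le h1 with he | h1'
  · have : a = c := Fin.ext he
    subst this; exact ha
  rcases eq_or_lt_of_le h2 with he | h2'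
  · have : c = b := Fin.ext he
    subst this; exact hb
  · exact hcon c h1' h2'

lemma vert_comp {h ℓ : ℕ} (X : Set (Fin h × Fin ℓ)) (i i' : Fin h) (j : Fin ℓ)
    (hd : ((i : ℤ) - (i' : ℤ)).natAbs = 1)
    (ha : ((i, j) : Fin h × Fin ℓ) ∈ Xᶜ) (hb : ((i', j) : Fin h × Fin ℓ) ∈ Xᶜ) :
    ((gridGraph h ℓ).induce Xᶜ).connectedComponentMk ⟨(i, j), ha⟩ =
    ((gridGraph h ℓ).induce Xᶜ).connectedComponentMk ⟨(i', j), hb⟩ := by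
  apply SimpleGraph.ConnectedComponent.sound
  apply SimpleGraph.Adj.reachable
  apply induce_adj' ha hb
  apply grid_adj
  · intro hcon
    have : (i : ℕ) = (i' : ℕ) := congrArg (fun p : Fin h × Fin ℓ => (p.1 : ℕ)) hcon
    omega
  · show ((i : ℤ) - (i' : ℤ)).natAbs + ((j : ℤ) - (j : ℤ)).natAbs = 1
    omega

lemma count_aux {α : Type*} [Fintype α] (X : Set α) (n : ℕ)
    (x : Fin n → α) (hx : ∀ i, x i ∈ X) (hinj : Function.Injective x)
    (y z : α) (hy : y ∈ X) (hz : z ∈ X) (hyz : y ≠ z)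
    (hyx : ∀ i, y ≠ x i) (hzx : ∀ i, z ≠ x i) : n + 2 ≤ X.ncard := by
  have hzr : z ∉ Set.range x := by rintro ⟨i, hi⟩; exact hzx i hi.symm
  have hyr : y ∉ insert z (Set.range x) := by
    rintro (rfl | ⟨i, hi⟩)
    · exact hyz rfl
    · exact hyx i hi.symm
  have h1 : (Set.range x).ncard = n := by
    rw [← Set.image_univ, Set.ncard_image_of_injective _ hinj, Set.ncard_univ]
    simp
  have h2 : (insert z (Set.range x)).ncard = n + 1 := by
    rw [Set.ncard_insert_of_notMem hzr (Set.toFinite _), h1]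
  have h3 : (insert y (insert z (Set.range x))).ncard = n + 2 := by
    rw [Set.ncard_insert_of_notMem hyr (Set.toFinite _), h2]
  rw [← h3]
  apply Set.ncard_le_ncard _ (Set.toFinite X)
  rintro a (rfl | rfl | ⟨i, rfl⟩)
  · exact hy
  · exact hz
  · exact hx i

lemma key (h ℓ : ℕ) (h1 : 1 < h) (h2 : 1 < ℓ)
    (X : Set (Fin h × Fin ℓ)) (hX : X.ncard ≤ h + 1)
    (c₁ c₂ : ((gridGraph h ℓ).induce Xᶜ).ConnectedComponent)
    (j₁ j₂ : Fin ℓ) (hlt : (j₁ : ℕ) < (j₂ : ℕ))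
    (hcol₁ : ∀ i : Fin h, ∃ hm : ((i, j₁) : Fin h × Fin ℓ) ∈ Xᶜ,
      ((gridGraph h ℓ).induce Xᶜ).connectedComponentMk ⟨(i, j₁), hm⟩ = c₁)
    (hcol₂ : ∀ i : Fin h, ∃ hm : ((i, j₂) : Fin h × Fin ℓ) ∈ Xᶜ,
      ((gridGraph h ℓ).induce Xᶜ).connectedComponentMk ⟨(i, j₂), hm⟩ = c₂)
    (hne : c₁ ≠ c₂) :
    Set.ncard {v : ↥Xᶜ |
        ((gridGraph h ℓ).induce Xᶜ).connectedComponentMk v ≠ c₁ ∧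
        ((gridGraph h ℓ).induce Xᶜ).connectedComponentMk v ≠ c₂} ≤ 1 := by
  -- one blocker per row, strictly between the two columns
  have hblock : ∀ i : Fin h, ∃ c : Fin ℓ,
      (j₁ : ℕ) < (c : ℕ) ∧ (c : ℕ) < (j₂ : ℕ) ∧ ((i, c) : Fin h × Fin ℓ) ∈ X := by
    intro i
    obtain ⟨hm1, e1⟩ := hcol₁ i
    obtain ⟨hm2, e2⟩ := hcol₂ i
    exact blocker X i j₁ j₂ hlt.le hm1 hm2 (by rw [e1, e2]; exact hne)
  choose xc hxc1 hxc2 hxc3 using hblock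
  have hxinj : Function.Injective (fun i : Fin h => ((i, xc i) : Fin h × Fin ℓ)) := by
    intro a b hab
    exact congrArg Prod.fst hab
  -- each bad vertex yields an extra element of X in its row, distinct from xc
  have extra : ∀ (i : Fin h) (j : Fin ℓ) (hm : ((i, j) : Fin h × Fin ℓ) ∈ Xᶜ),
      ((gridGraph h ℓ).induce Xᶜ).connectedComponentMk ⟨(i, j), hm⟩ ≠ c₁ →
      ((gridGraph h ℓ).induce Xᶜ).connectedComponentMk ⟨(i, j), hm⟩ ≠ c₂ →
      ∃ c : Fin ℓ, ((i, c) : Fin h × Fin ℓ) ∈ X ∧ (c : ℕ) ≠ (xc i : ℕ) := by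
    intro i j hm hb1 hb2
    obtain ⟨hm1, e1⟩ := hcol₁ i
    obtain ⟨hm2, e2⟩ := hcol₂ i
    have hj1 : (j : ℕ) ≠ (j₁ : ℕ) := by
      intro he
      apply hb1
      have : j = j₁ := Fin.ext he
      subst this
      rw [← e1]
    have hj2 : (j : ℕ) ≠ (j₂ : ℕ) := by
      intro he
      apply hb2
      have : j = j₂ := Fin.ext he
      subst this
      rw [← e2]
    rcases lt_trichotomy (j : ℕ) (j₁ : ℕ) with hc | hc | hc
    · obtain ⟨c, hc1, hc2, hc3⟩ := blocker X i j j₁ hc.le hm hm1 (by rw [e1]; exact hb1)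
      exact ⟨c, hc3, by have := hxc1 i; omega⟩
    · exact absurd hc hj1
    · rcases lt_trichotomy (j : ℕ) (j₂ : ℕ) with hd | hd | hd
      · obtain ⟨cl, hl1, hl2, hl3⟩ := blocker X i j₁ j hc.le hm1 hm
          (by rw [e1]; exact Ne.symm hb1)
        obtain ⟨cr, hr1, hr2, hr3⟩ := blocker X i j j₂ hd.le hm hm2 (by rw [e2]; exact hb2)
        by_cases hcx : (cl : ℕ) = (xc i : ℕ)
        · exact ⟨cr, hr3, by omega⟩
        · exact ⟨cl, hl3, hcx⟩
      · exact absurd hd hj2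
      · obtain ⟨c, hc1, hc2, hc3⟩ := blocker X i j₂ j hd.le hm2 hm
          (by rw [e2]; exact Ne.symm hb2)
        exact ⟨c, hc3, by have := hxc2 i; omega⟩
  -- two bad vertices in distinct rows are impossible
  have tworows : ∀ (u v : ↥Xᶜ),
      ((gridGraph h ℓ).induce Xᶜ).connectedComponentMk u ≠ c₁ →
      ((gridGraph h ℓ).induce Xᶜ).connectedComponentMk u ≠ c₂ →
      ((gridGraph h ℓ).induce Xᶜ).connectedComponentMk v ≠ c₁ →
      ((gridGraph h ℓ).induce Xᶜ).connectedComponentMk v ≠ c₂ →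
      u.val.1 ≠ v.val.1 → False := by
    intro u v hu1 hu2 hv1 hv2 hrow
    obtain ⟨cu, hcu, hcux⟩ := extra u.val.1 u.val.2 u.2 hu1 hu2
    obtain ⟨cv, hcv, hcvx⟩ := extra v.val.1 v.val.2 v.2 hv1 hv2
    have hne' : ((u.val.1, cu) : Fin h × Fin ℓ) ≠ (v.val.1, cv) :=
      fun he => hrow (Prod.ext_iff.mp he).1
    have hcount := count_aux X h (fun i : Fin h => ((i, xc i) : Fin h × Fin ℓ))
      (fun i => hxc3 i) hxinj (u.val.1, cu) (v.val.1, cv) hcu hcv hne'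
      (by
        intro i he
        have e1 : u.val.1 = i := congrArg Prod.fst he
        have e2 : cu = xc i := congrArg Prod.snd he
        apply hcux
        rw [e1, e2])
      (by
        intro i he
        have e1 : v.val.1 = i := congrArg Prod.fst he
        have e2 : cv = xc i := congrArg Prod.snd he
        apply hcvx
        rw [e1, e2])
    omega
  rw [Set.ncard_le_one (Set.toFinite _)]
  rintro u ⟨hu1, hu2⟩ v ⟨hv1, hv2⟩
  by_contra huv
  have hrow : u.val.1 = v.val.1 := by
    by_contra hr
    exact tworows u v hu1 hu2 hv1 hv2 hr
  have hcolne : u.val.2 ≠ v.val.2 := by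
    intro hc
    exact huv (Subtype.ext (Prod.ext hrow hc))
  -- an adjacent row
  have hi'ex : ∃ i' : Fin h, ((u.val.1 : ℤ) - (i' : ℤ)).natAbs = 1 := by
    by_cases hcase : (u.val.1 : ℕ) + 1 < h
    · refine ⟨⟨(u.val.1 : ℕ) + 1, hcase⟩, ?_⟩
      simp only [Fin.val_mk]
      omega
    · have hub := u.val.1.isLt
      refine ⟨⟨(u.val.1 : ℕ) - 1, by omega⟩, ?_⟩
      simp only [Fin.val_mk]
      omega
  obtain ⟨i', hd⟩ := hi'ex
  have hi'ne : (i' : ℕ) ≠ (u.val.1 : ℕ) := by omega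
  -- vertical neighbours of bad vertices in row u.val.1 must lie in X
  have vertX : ∀ (w : ↥Xᶜ),
      ((gridGraph h ℓ).induce Xᶜ).connectedComponentMk w ≠ c₁ →
      ((gridGraph h ℓ).induce Xᶜ).connectedComponentMk w ≠ c₂ →
      w.val.1 = u.val.1 → ((i', w.val.2) : Fin h × Fin ℓ) ∈ X := by
    intro w hw1 hw2 hwrow
    by_contra hmem
    have hmem' : ((i', w.val.2) : Fin h × Fin ℓ) ∈ Xᶜ := hmem
    have hcomp : ((gridGraph h ℓ).induce Xᶜ).connectedComponentMk ⟨(w.val.1, w.val.2), w.2⟩ =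
        ((gridGraph h ℓ).induce Xᶜ).connectedComponentMk ⟨(i', w.val.2), hmem'⟩ :=
      vert_comp X w.val.1 i' w.val.2 (by rw [hwrow]; exact hd) w.2 hmem'
    exact tworows w ⟨(i', w.val.2), hmem'⟩ hw1 hw2
      (by rw [← hcomp]; exact hw1) (by rw [← hcomp]; exact hw2)
      (by rw [hwrow]; exact fun hh => hi'ne (congrArg Fin.val hh.symm))
  have hXu : ((i', u.val.2) : Fin h × Fin ℓ) ∈ X := vertX u hu1 hu2 rfl
  have hXv : ((i', v.val.2) : Fin h × Fin ℓ) ∈ X := vertX v hv1 hv2 hrow.symm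
  obtain ⟨cu, hcu, hcux⟩ := extra u.val.1 u.val.2 u.2 hu1 hu2
  have hyy : ∃ jj : Fin ℓ, ((i', jj) : Fin h × Fin ℓ) ∈ X ∧ (jj : ℕ) ≠ (xc i' : ℕ) := by
    by_cases hy : (u.val.2 : ℕ) = (xc i' : ℕ)
    · refine ⟨v.val.2, hXv, ?_⟩
      have : (u.val.2 : ℕ) ≠ (v.val.2 : ℕ) := fun hh => hcolne (Fin.ext hh)
      omega
    · exact ⟨u.val.2, hXu, hy⟩
  obtain ⟨jj, hjjX, hjjne⟩ := hyy
  have hcount := count_aux X h (fun i : Fin h => ((i, xc i) : Fin h × Fin ℓ))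
    (fun i => hxc3 i) hxinj (i', jj) (u.val.1, cu) hjjX hcu
    (show ((i', jj) : Fin h × Fin ℓ) ≠ (u.val.1, cu) from
      fun he => hi'ne (congrArg Fin.val (Prod.ext_iff.mp he).1))
    (by
      intro i he
      have e1 : i' = i := congrArg Prod.fst he
      have e2 : jj = xc i := congrArg Prod.snd he
      apply hjjne
      rw [e2, ← e1])
    (by
      intro i he
      have e1 : u.val.1 = i := congrArg Prod.fst he
      have e2 : cu = xc i := congrArg Prod.snd he
      apply hcux
      rw [e1, e2])
  omega


/-- For `h, ℓ > 1` and `X` of size at most `h+1`: if `G(h,ℓ) \ X` has two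
distinct good components, then all remaining vertices outside these two
components form at most one additional component, consisting of a single
vertex; i.e., at most one vertex lies outside the two good components. -/
theorem grid_two_good_components (h ℓ : ℕ) (h1 : 1 < h) (h2 : 1 < ℓ)
    (X : Set (Fin h × Fin ℓ)) (hX : X.ncard ≤ h + 1)
    (c₁ c₂ : ((gridGraph h ℓ).induce Xᶜ).ConnectedComponent)
    (hc₁ : GoodComp X c₁) (hc₂ : GoodComp X c₂) (hne : c₁ ≠ c₂) :
    Set.ncard {v : ↥Xᶜ |
        ((gridGraph h ℓ).induce Xᶜ).connectedComponentMk v ≠ c₁ ∧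
        ((gridGraph h ℓ).induce Xᶜ).connectedComponentMk v ≠ c₂} ≤ 1 := by
  obtain ⟨j₁, hcol₁⟩ := hc₁
  obtain ⟨j₂, hcol₂⟩ := hc₂
  rcases lt_trichotomy (j₁ : ℕ) (j₂ : ℕ) with hlt | heq | hgt
  · exact key h ℓ h1 h2 X hX c₁ c₂ j₁ j₂ hlt hcol₁ hcol₂ hne
  · exfalso
    have : j₁ = j₂ := Fin.ext heq
    subst this
    obtain ⟨hm1, e1⟩ := hcol₁ ⟨0, by omega⟩
    obtain ⟨hm2, e2⟩ := hcol₂ ⟨0, by omega⟩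
    apply hne
    rw [← e1, ← e2]
  · have hset : {v : ↥Xᶜ |
        ((gridGraph h ℓ).induce Xᶜ).connectedComponentMk v ≠ c₁ ∧
        ((gridGraph h ℓ).induce Xᶜ).connectedComponentMk v ≠ c₂} =
        {v : ↥Xᶜ |
        ((gridGraph h ℓ).induce Xᶜ).connectedComponentMk v ≠ c₂ ∧
        ((gridGraph h ℓ).induce Xᶜ).connectedComponentMk v ≠ c₁} := by
      ext v
      exact and_comm
    rw [hset]
    exact key h ℓ h1 h2 X hX c₂ c₁ j₂ j₁ hgt hcol₂ hcol₁ (Ne.symm hne)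
end

section
/- Let 1 < h < ℓ - 1 and let X be a set of at most h+1 vertices of the (h×ℓ)-grid. Then the graph G(h,ℓ) \ X has at least one good component, i.e., a connected component containing a full column of the grid. -/
lemma grid_adj_col {h ℓ : ℕ} {a b : Fin h} (j : Fin ℓ) (hab : (b : ℕ) = (a : ℕ) + 1) :
    (gridGraph h ℓ).Adj (a, j) (b, j) := by
  rw [gridGraph, SimpleGraph.fromRel_adj]
  refine ⟨fun hEq => ?_, Or.inr ?_⟩
  · have : a = b := (Prod.mk.injEq _ _ _ _ ▸ hEq).1
    have := Fin.val_eq_val a b |>.mpr this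
    omega
  · simp only []
    have h1 : ((b : ℤ) - (a : ℤ)).natAbs = 1 := by omega
    have h2 : ((j : ℤ) - (j : ℤ)).natAbs = 0 := by omega
    omega

/-- For `1 < h < ℓ - 1` and `X` a set of at most `h+1` vertices of the
(h × ℓ)-grid, the graph `G(h,ℓ) \ X` has at least one good component. -/
theorem grid_good_component_exists (h ℓ : ℕ) (h1 : 1 < h) (h2 : h + 1 < ℓ)
    (X : Set (Fin h × Fin ℓ)) (hX : X.ncard ≤ h + 1) :
    ∃ c : ((gridGraph h ℓ).induce Xᶜ).ConnectedComponent, GoodComp X c := by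
  -- find a column disjoint from X
  have himg : (Prod.snd '' X).ncard ≤ h + 1 :=
    le_trans (Set.ncard_image_le (Set.toFinite X)) hX
  have hne : Prod.snd '' X ≠ Set.univ := by
    intro hEq
    rw [hEq, Set.ncard_univ] at himg
    simp [Nat.card_eq_fintype_card] at himg
    omega
  obtain ⟨j, hj⟩ : ∃ j : Fin ℓ, j ∉ Prod.snd '' X := by
    by_contra hcon
    push_neg at hcon
    exact hne (Set.eq_univ_of_forall hcon)
  have hmem : ∀ i : Fin h, ((i, j) : Fin h × Fin ℓ) ∈ Xᶜ := by
    intro i hi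
    exact hj ⟨(i, j), hi, rfl⟩
  have hpos : 0 < h := by omega
  set G := (gridGraph h ℓ).induce Xᶜ with hG
  -- all column vertices are reachable from the bottom one
  have hreach : ∀ n (hn : n < h),
      G.Reachable ⟨((⟨0, hpos⟩ : Fin h), j), hmem _⟩ ⟨((⟨n, hn⟩ : Fin h), j), hmem _⟩ := by
    intro n
    induction n with
    | zero => intro hn; exact SimpleGraph.Reachable.refl _
    | succ m ih =>
      intro hn
      have hm : m < h := by omega
      refine (ih hm).trans (SimpleGraph.Adj.reachable ?_)
      show (gridGraph h ℓ).Adj ((⟨m, hm⟩ : Fin h), j) ((⟨m + 1, hn⟩ : Fin h), j)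
      exact grid_adj_col j rfl
  refine ⟨G.connectedComponentMk ⟨((⟨0, hpos⟩ : Fin h), j), hmem _⟩, j, fun i => ⟨hmem i, ?_⟩⟩
  have := hreach i.val i.isLt
  rw [SimpleGraph.ConnectedComponent.eq]
  exact (by simpa using this.symm)
end

section
/- Let 1 < h < ℓ - 2 and let X be a set of at most h+1 vertices of the (h×ℓ)-grid. Every connected component C of G(h,ℓ) \ X with more than (h-1)(h+2)/2 vertices is good (contains a full column). -/
lemma grid_adj_iff {h ℓ : ℕ} {u v : Fin h × Fin ℓ} :
    (gridGraph h ℓ).Adj u v ↔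
      ((u.1 : ℤ) - (v.1 : ℤ)).natAbs + ((u.2 : ℤ) - (v.2 : ℤ)).natAbs = 1 := by
  unfold gridGraph
  rw [SimpleGraph.fromRel_adj]
  constructor
  · rintro ⟨hne, hr | hr⟩
    · exact hr
    · omega
  · intro hr
    refine ⟨?_, Or.inl hr⟩
    rintro rfl
    simp at hr

lemma grid_adj_col_s6 {h ℓ : ℕ} {u v : Fin h × Fin ℓ} (hadj : (gridGraph h ℓ).Adj u v) :
    ((u.2 : ℕ) ≤ (v.2 : ℕ) + 1) ∧ ((v.2 : ℕ) ≤ (u.2 : ℕ) + 1) := by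
  have := grid_adj_iff.mp hadj
  omega

lemma grid_adj_vert {h ℓ : ℕ} {a b : Fin h} {j : Fin ℓ} (hab : (a : ℕ) + 1 = (b : ℕ)) :
    (gridGraph h ℓ).Adj (a, j) (b, j) := by
  rw [grid_adj_iff]
  simp only
  omega

lemma grid_adj_horiz {h ℓ : ℕ} {i : Fin h} {j j' : Fin ℓ} (hjj : (j : ℕ) + 1 = (j' : ℕ)) :
    (gridGraph h ℓ).Adj (i, j) (i, j') := by
  rw [grid_adj_iff]
  simp only
  omega

lemma induce_adj'_s6 {h ℓ : ℕ} {X : Set (Fin h × Fin ℓ)} {u v : ↥Xᶜ} :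
    ((gridGraph h ℓ).induce Xᶜ).Adj u v ↔ (gridGraph h ℓ).Adj u.1 v.1 := by
  simp [SimpleGraph.comap_adj]

lemma col_reach {h ℓ : ℕ} (X : Set (Fin h × Fin ℓ)) (j : Fin ℓ)
    (hcol : ∀ i : Fin h, ((i, j) : Fin h × Fin ℓ) ∈ Xᶜ) (a b : Fin h) :
    ((gridGraph h ℓ).induce Xᶜ).Reachable ⟨(a, j), hcol a⟩ ⟨(b, j), hcol b⟩ := by
  have key : ∀ d : ℕ, ∀ a b : Fin h, (b : ℕ) = (a : ℕ) + d →
      ((gridGraph h ℓ).induce Xᶜ).Reachable ⟨(a, j), hcol a⟩ ⟨(b, j), hcol b⟩ := by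
    intro d
    induction d with
    | zero =>
      intro a b hab
      have : a = b := Fin.ext (by omega)
      subst this
      exact SimpleGraph.Reachable.refl _
    | succ e ihe =>
      intro a b hab
      have ha1 : (a : ℕ) + 1 < h := by omega
      set a' : Fin h := ⟨(a : ℕ) + 1, ha1⟩ with ha'
      have hadj : ((gridGraph h ℓ).induce Xᶜ).Adj ⟨(a, j), hcol a⟩ ⟨(a', j), hcol a'⟩ :=
        induce_adj'_s6.mpr (grid_adj_vert rfl)
      exact hadj.reachable.trans (ihe a' b (by simp [ha']; omega))
  rcases Nat.le_total (a : ℕ) (b : ℕ) with hab | hab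
  · exact key ((b : ℕ) - a) a b (by omega)
  · exact (key ((a : ℕ) - b) b a (by omega)).symm

lemma walk_col {h ℓ : ℕ} {X : Set (Fin h × Fin ℓ)} {u v : ↥Xᶜ}
    (W : ((gridGraph h ℓ).induce Xᶜ).Walk u v) :
    ∀ jn : ℕ, (u.1.2 : ℕ) ≤ jn → jn ≤ (v.1.2 : ℕ) →
      ∃ w ∈ W.support, ((w : ↥Xᶜ).1.2 : ℕ) = jn := by
  induction W with
  | @nil a =>
    intro jn h1 h2
    exact ⟨a, by simp, by omega⟩
  | @cons a b v hadj W ih =>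
    intro jn h1 h2
    by_cases hc : (b.1.2 : ℕ) ≤ jn
    · obtain ⟨w, hw, hwc⟩ := ih jn hc h2
      exact ⟨w, by simp [hw], hwc⟩
    · refine ⟨a, by simp, ?_⟩
      have := grid_adj_col_s6 (induce_adj'_s6.mp hadj)
      omega


lemma gauss_aux : ∀ n : ℕ, 2 * ∑ i ∈ Finset.Ico 1 n, (n - i) = n * (n - 1) := by
  intro n
  induction n with
  | zero => simp
  | succ m ih =>
    rcases Nat.eq_zero_or_pos m with hm | hm
    · subst hm; simp
    rw [Finset.sum_Ico_succ_top (by omega : 1 ≤ m)]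
    have h1 : ∑ i ∈ Finset.Ico 1 m, (m + 1 - i) = (∑ i ∈ Finset.Ico 1 m, (m - i)) + (m - 1) := by
      have h2 : ∑ i ∈ Finset.Ico 1 m, (m + 1 - i) = ∑ i ∈ Finset.Ico 1 m, ((m - i) + 1) := by
        apply Finset.sum_congr rfl
        intro i hi
        simp only [Finset.mem_Ico] at hi
        omega
      rw [h2, Finset.sum_add_distrib]
      simp [Nat.card_Ico]
    rw [h1]
    obtain ⟨t, rfl⟩ : ∃ t, m = t + 1 := ⟨m - 1, by omega⟩
    simp only [Nat.add_sub_cancel] at ih ⊢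
    have hx : t + 1 + 1 - (t + 1) = 1 := by omega
    rw [hx]
    nlinarith [ih]

lemma numeric_lemma (h k : ℕ) (s x : ℕ → ℕ) (hk : 1 ≤ k) (hh : 1 ≤ h)
    (hs1 : ∀ i, i < k → 1 ≤ s i)
    (hx1 : ∀ i, i < k → 1 ≤ x i)
    (hsx : ∀ i, i < k → s i + x i ≤ h)
    (hchain : ∀ i, i < k → s i ≤ s (i + 1) + x (i + 1))
    (hsk : s k = 0)
    (hsum : ∑ i ∈ Finset.range (k + 1), x i ≤ h + 1) :
    2 * ∑ i ∈ Finset.range k, s i ≤ (h - 1) * (h + 2) := by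
  have hxk : 1 ≤ x k := by
    have hc := hchain (k - 1) (by omega)
    have hs := hs1 (k - 1) (by omega)
    have he : k - 1 + 1 = k := by omega
    rw [he] at hc
    omega
  have hxall : ∀ i, i < k + 1 → 1 ≤ x i := by
    intro i hi
    rcases Nat.lt_or_ge i k with hik | hik
    · exact hx1 i hik
    · have : i = k := by omega
      subst this; exact hxk
  have hkh : k ≤ h := by
    have hb : k + 1 ≤ ∑ i ∈ Finset.range (k + 1), x i := by
      calc k + 1 = ∑ _i ∈ Finset.range (k + 1), 1 := by simp
        _ ≤ _ := Finset.sum_le_sum (fun i hi => hxall i (Finset.mem_range.mp hi))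
    omega
  -- s i ≤ h - i  (as s i + i ≤ h)
  have hstep : ∀ d i, i + d = k → s i ≤ ∑ t ∈ Finset.Ico (i + 1) (k + 1), x t := by
    intro d
    induction d with
    | zero =>
      intro i hi
      have : i = k := by omega
      subst this; simp [hsk]
    | succ e ihe =>
      intro i hi
      have hik : i < k := by omega
      have hc := hchain i hik
      have h2 := ihe (i + 1) (by omega)
      have h3 : ∑ t ∈ Finset.Ico (i + 1) (k + 1), x t
          = x (i + 1) + ∑ t ∈ Finset.Ico (i + 1 + 1) (k + 1), x t := by
        rw [← Finset.sum_eq_sum_Ico_succ_bot (by omega : i + 1 < k + 1)]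
      omega
  have hsi : ∀ i, i < k → s i + (i + 1) ≤ h + 1 := by
    intro i hik
    have h1 := hstep (k - i) i (by omega)
    have h2 : ∑ t ∈ Finset.range (k + 1), x t
        = ∑ t ∈ Finset.Ico 0 (i + 1), x t + ∑ t ∈ Finset.Ico (i + 1) (k + 1), x t := by
      rw [Finset.range_eq_Ico,
        ← Finset.sum_Ico_consecutive x (by omega : (0:ℕ) ≤ i + 1) (by omega : i + 1 ≤ k + 1)]
    have h3 : i + 1 ≤ ∑ t ∈ Finset.Ico 0 (i + 1), x t := by
      calc i + 1 = ∑ _t ∈ Finset.Ico 0 (i + 1), 1 := by simp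
        _ ≤ _ := Finset.sum_le_sum (fun t ht => by
            have := Finset.mem_Ico.mp ht
            exact hxall t (by omega))
    omega
  -- now bound the sum
  have hbound : ∑ i ∈ Finset.range k, s i ≤ (h - 1) + ∑ i ∈ Finset.Ico 1 h, (h - i) := by
    have hsplit : ∑ i ∈ Finset.range k, s i = s 0 + ∑ i ∈ Finset.Ico 1 k, s i := by
      rw [Finset.range_eq_Ico, ← Finset.sum_eq_sum_Ico_succ_bot (by omega : 0 < k)]
    rw [hsplit]
    have hs0 : s 0 ≤ h - 1 := by
      have := hsx 0 (by omega)
      have := hx1 0 (by omega)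
      omega
    have hrest : ∑ i ∈ Finset.Ico 1 k, s i ≤ ∑ i ∈ Finset.Ico 1 h, (h - i) := by
      calc ∑ i ∈ Finset.Ico 1 k, s i ≤ ∑ i ∈ Finset.Ico 1 k, (h - i) := by
            apply Finset.sum_le_sum
            intro i hi
            have hi' := Finset.mem_Ico.mp hi
            have := hsi i (by omega)
            omega
        _ ≤ ∑ i ∈ Finset.Ico 1 h, (h - i) := by
            apply Finset.sum_le_sum_of_subset
            apply Finset.Ico_subset_Ico le_rfl hkh
    omega
  have hg := gauss_aux h
  have : (h - 1) * (h + 2) = 2 * (h - 1) + h * (h - 1) := by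
    obtain ⟨t, rfl⟩ : ∃ t, h = t + 1 := ⟨h - 1, by omega⟩
    simp only [Nat.add_sub_cancel]
    ring
  omega

/-- For `1 < h < ℓ - 2` and `X` of size at most `h+1`: every connected
component `C` of `G(h,ℓ) \ X` with more than `(h-1)(h+2)/2` vertices is good. -/
theorem grid_large_component_good (h ℓ : ℕ) (h1 : 1 < h) (h2 : h + 2 < ℓ)
    (X : Set (Fin h × Fin ℓ)) (hX : X.ncard ≤ h + 1)
    (c : ((gridGraph h ℓ).induce Xᶜ).ConnectedComponent)
    (hsize : (h - 1) * (h + 2) <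
      2 * Set.ncard {v : ↥Xᶜ | ((gridGraph h ℓ).induce Xᶜ).connectedComponentMk v = c}) :
    GoodComp X c := by
  classical
  by_contra hgood
  set T : Finset (Fin h × Fin ℓ) := Finset.univ.filter
    (fun v => ∃ hv : v ∈ Xᶜ, ((gridGraph h ℓ).induce Xᶜ).connectedComponentMk ⟨v, hv⟩ = c) with hTdef
  have hmemT : ∀ v : Fin h × Fin ℓ,
      v ∈ T ↔ ∃ hv : v ∈ Xᶜ, ((gridGraph h ℓ).induce Xᶜ).connectedComponentMk ⟨v, hv⟩ = c := by
    intro v; simp [hTdef]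
  -- identify the ncard with T.card
  have hcardT : Set.ncard {v : ↥Xᶜ | ((gridGraph h ℓ).induce Xᶜ).connectedComponentMk v = c} = T.card := by
    have hfin : {v : ↥Xᶜ | ((gridGraph h ℓ).induce Xᶜ).connectedComponentMk v = c}.Finite := Set.toFinite _
    rw [Set.ncard_eq_toFinset_card _ hfin]
    apply Finset.card_bij (fun (a : ↥Xᶜ) _ => a.1)
    · intro a ha
      rw [Set.Finite.mem_toFinset] at ha
      exact (hmemT a.1).mpr ⟨a.2, ha⟩
    · intro a₁ h₁ a₂ h₂ hval
      exact Subtype.ext hval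
    · intro b hb
      obtain ⟨hb', hc⟩ := (hmemT b).mp hb
      exact ⟨⟨b, hb'⟩, by rw [Set.Finite.mem_toFinset]; exact hc, rfl⟩
  -- X as a finset
  set XF : Finset (Fin h × Fin ℓ) := Finset.univ.filter (· ∈ X) with hXFdef
  have hmemXF : ∀ v : Fin h × Fin ℓ, v ∈ XF ↔ v ∈ X := by intro v; simp [hXFdef]
  have hXFcard : XF.card ≤ h + 1 := by
    have hfin : X.Finite := Set.toFinite _
    have : XF = hfin.toFinset := by
      ext v; rw [hmemXF, Set.Finite.mem_toFinset]
    rw [this, ← Set.ncard_eq_toFinset_card _ hfin]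
    exact hX
  -- column counts
  set sN : ℕ → ℕ := fun jn => (T.filter (fun v => (v.2 : ℕ) = jn)).card with hsNdef
  set xN : ℕ → ℕ := fun jn => (XF.filter (fun v => (v.2 : ℕ) = jn)).card with hxNdef
  -- each column has h vertices
  have hcolcard : ∀ jn, jn < ℓ →
      (Finset.univ.filter (fun v : Fin h × Fin ℓ => (v.2 : ℕ) = jn)).card = h := by
    intro jn hjn
    have hbij : (Finset.univ.filter (fun v : Fin h × Fin ℓ => (v.2 : ℕ) = jn)).card
        = (Finset.univ : Finset (Fin h)).card := by
      refine Finset.card_bij (fun (v : Fin h × Fin ℓ) _ => v.1) ?_ ?_ ?_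
      · intro a _; exact Finset.mem_univ _
      · intro a₁ ha₁ a₂ ha₂ hval
        simp only [Finset.mem_filter] at ha₁ ha₂
        have : a₁.2 = a₂.2 := Fin.ext (by omega)
        exact Prod.ext hval this
      · intro b _
        exact ⟨(b, ⟨jn, hjn⟩), by simp, rfl⟩
    rw [hbij, Finset.card_univ, Fintype.card_fin]
  have hTX : ∀ v, v ∈ T → v ∉ XF := by
    intro v hv hvX
    obtain ⟨hv', _⟩ := (hmemT v).mp hv
    exact hv' ((hmemXF v).mp hvX)
  have hsx : ∀ jn, jn < ℓ → sN jn + xN jn ≤ h := by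
    intro jn hjn
    rw [← hcolcard jn hjn]
    have hdisj : Disjoint (T.filter (fun v => (v.2 : ℕ) = jn))
        (XF.filter (fun v => (v.2 : ℕ) = jn)) := by
      rw [Finset.disjoint_left]
      intro a ha ha'
      exact hTX a (Finset.mem_filter.mp ha).1 (Finset.mem_filter.mp ha').1
    calc sN jn + xN jn
        = ((T.filter (fun v => (v.2 : ℕ) = jn)) ∪ (XF.filter (fun v => (v.2 : ℕ) = jn))).card := by
          rw [Finset.card_union_of_disjoint hdisj]
      _ ≤ _ := by
          apply Finset.card_le_card
          intro a ha
          rcases Finset.mem_union.mp ha with ha | ha <;>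
            exact Finset.mem_filter.mpr ⟨Finset.mem_univ _, (Finset.mem_filter.mp ha).2⟩
  -- total sums
  have hTsum : T.card = ∑ jn ∈ Finset.range ℓ, sN jn :=
    Finset.card_eq_sum_card_fiberwise (fun v _ => Finset.mem_range.mpr v.2.2)
  have hXsum : XF.card = ∑ jn ∈ Finset.range ℓ, xN jn :=
    Finset.card_eq_sum_card_fiberwise (fun v _ => Finset.mem_range.mpr v.2.2)
  -- T nonempty
  have hTpos : 0 < T.card := by
    rw [← hcardT]; omega
  have hTne : T.Nonempty := Finset.card_pos.mp hTpos
  -- min and max columns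
  have hJne : (T.image (fun v => (v.2 : ℕ))).Nonempty := hTne.image _
  set jmin := (T.image (fun v => (v.2 : ℕ))).min' hJne with hjmindef
  set jmax := (T.image (fun v => (v.2 : ℕ))).max' hJne with hjmaxdef
  have hjminmax : jmin ≤ jmax := by
    rw [hjmindef, hjmaxdef]
    exact Finset.min'_le _ _ (Finset.max'_mem _ hJne)
  have hjmaxlt : jmax < ℓ := by
    obtain ⟨v, _, hv⟩ := Finset.mem_image.mp (Finset.max'_mem _ hJne)
    rw [← hjmaxdef] at hv
    rw [← hv]; exact v.2.2
  have hs_zero : ∀ jn, (jn < jmin ∨ jmax < jn) → sN jn = 0 := by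
    intro jn hjn
    simp only [hsNdef]
    rw [Finset.card_eq_zero, Finset.filter_eq_empty_iff]
    intro v hv hcol
    have hmem : (v.2 : ℕ) ∈ T.image (fun v => (v.2 : ℕ)) :=
      Finset.mem_image.mpr ⟨v, hv, rfl⟩
    have hlo := Finset.min'_le _ _ hmem
    have hhi := Finset.le_max' _ _ hmem
    rw [← hjmindef] at hlo
    rw [← hjmaxdef] at hhi
    omega
  -- neighbors of component vertices outside X are in the component
  have hnbr : ∀ v w, v ∈ T → (gridGraph h ℓ).Adj v w → w ∉ X → w ∈ T := by
    intro v w hv hadj hw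
    obtain ⟨hv', hc⟩ := (hmemT v).mp hv
    refine (hmemT w).mpr ⟨hw, ?_⟩
    have hadj' : ((gridGraph h ℓ).induce Xᶜ).Adj ⟨w, hw⟩ ⟨v, hv'⟩ := induce_adj'_s6.mpr hadj.symm
    rw [← hc]
    exact SimpleGraph.ConnectedComponent.sound hadj'.reachable
  -- horizontal chain inequalities
  have hchainR : ∀ jn, jn + 1 < ℓ → sN jn ≤ sN (jn + 1) + xN (jn + 1) := by
    intro jn hjn
    have hle : (T.filter (fun v => (v.2 : ℕ) = jn)).card ≤
        ((T.filter (fun v => (v.2 : ℕ) = jn + 1)) ∪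
         (XF.filter (fun v => (v.2 : ℕ) = jn + 1))).card := by
      apply Finset.card_le_card_of_injOn (fun v => (v.1, (⟨jn + 1, hjn⟩ : Fin ℓ)))
      · intro v hv
        obtain ⟨hvT, hvcol⟩ := Finset.mem_filter.mp hv
        have hadj : (gridGraph h ℓ).Adj v (v.1, ⟨jn + 1, hjn⟩) := by
          have : v = (v.1, v.2) := rfl
          rw [this]
          exact grid_adj_horiz (by simp [hvcol])
        by_cases hX' : (v.1, (⟨jn + 1, hjn⟩ : Fin ℓ)) ∈ X
        · exact Finset.mem_union_right _ (Finset.mem_filter.mpr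
            ⟨(hmemXF _).mpr hX', by simp⟩)
        · exact Finset.mem_union_left _ (Finset.mem_filter.mpr
            ⟨hnbr v _ hvT hadj hX', by simp⟩)
      · intro v₁ hv₁ v₂ hv₂ heq
        obtain ⟨_, hc₁⟩ := Finset.mem_filter.mp hv₁
        obtain ⟨_, hc₂⟩ := Finset.mem_filter.mp hv₂
        have h1 : v₁.1 = v₂.1 := (Prod.ext_iff.mp heq).1
        have h2 : v₁.2 = v₂.2 := Fin.ext (by omega)
        exact Prod.ext h1 h2
    calc sN jn ≤ _ := hle
      _ ≤ sN (jn + 1) + xN (jn + 1) := Finset.card_union_le _ _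
  have hchainL : ∀ jn, jn + 1 < ℓ → sN (jn + 1) ≤ sN jn + xN jn := by
    intro jn hjn
    have hjnlt : jn < ℓ := by omega
    have hle : (T.filter (fun v => (v.2 : ℕ) = jn + 1)).card ≤
        ((T.filter (fun v => (v.2 : ℕ) = jn)) ∪
         (XF.filter (fun v => (v.2 : ℕ) = jn))).card := by
      apply Finset.card_le_card_of_injOn (fun v => (v.1, (⟨jn, hjnlt⟩ : Fin ℓ)))
      · intro v hv
        obtain ⟨hvT, hvcol⟩ := Finset.mem_filter.mp hv
        have hadj : (gridGraph h ℓ).Adj v (v.1, ⟨jn, hjnlt⟩) := by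
          have : v = (v.1, v.2) := rfl
          rw [this]
          exact (grid_adj_horiz (by simp [hvcol])).symm
        by_cases hX' : (v.1, (⟨jn, hjnlt⟩ : Fin ℓ)) ∈ X
        · exact Finset.mem_union_right _ (Finset.mem_filter.mpr
            ⟨(hmemXF _).mpr hX', by simp⟩)
        · exact Finset.mem_union_left _ (Finset.mem_filter.mpr
            ⟨hnbr v _ hvT hadj hX', by simp⟩)
      · intro v₁ hv₁ v₂ hv₂ heq
        obtain ⟨_, hc₁⟩ := Finset.mem_filter.mp hv₁
        obtain ⟨_, hc₂⟩ := Finset.mem_filter.mp hv₂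
        have h1 : v₁.1 = v₂.1 := (Prod.ext_iff.mp heq).1
        have h2 : v₁.2 = v₂.2 := Fin.ext (by omega)
        exact Prod.ext h1 h2
    calc sN (jn + 1) ≤ _ := hle
      _ ≤ sN jn + xN jn := Finset.card_union_le _ _
  -- every column between jmin and jmax meets the component
  have hS1 : ∀ jn, jmin ≤ jn → jn ≤ jmax → 1 ≤ sN jn := by
    intro jn hminle hlemax
    obtain ⟨u, huT, hucol⟩ := Finset.mem_image.mp (Finset.min'_mem _ hJne)
    obtain ⟨v, hvT, hvcol⟩ := Finset.mem_image.mp (Finset.max'_mem _ hJne)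
    rw [← hjmindef] at hucol
    rw [← hjmaxdef] at hvcol
    obtain ⟨hu', huc⟩ := (hmemT u).mp huT
    obtain ⟨hv', hvc⟩ := (hmemT v).mp hvT
    have hreach : ((gridGraph h ℓ).induce Xᶜ).Reachable ⟨u, hu'⟩ ⟨v, hv'⟩ :=
      SimpleGraph.ConnectedComponent.exact (huc.trans hvc.symm)
    obtain ⟨W⟩ := hreach
    obtain ⟨w, hwW, hwcol⟩ := walk_col W jn (by simp [hucol]; omega) (by simp [hvcol]; omega)
    have hwreach : ((gridGraph h ℓ).induce Xᶜ).Reachable ⟨u, hu'⟩ w := ⟨W.takeUntil w hwW⟩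
    have hwc : ((gridGraph h ℓ).induce Xᶜ).connectedComponentMk w = c := by
      rw [← SimpleGraph.ConnectedComponent.sound hwreach]
      exact huc
    have hwT : w.1 ∈ T := (hmemT w.1).mpr ⟨w.2, by
      convert hwc⟩
    have : w.1 ∈ T.filter (fun v => (v.2 : ℕ) = jn) := Finset.mem_filter.mpr ⟨hwT, hwcol⟩
    have := Finset.card_pos.mpr ⟨w.1, this⟩
    simpa [hsNdef] using this
  -- columns meeting the component also meet X (otherwise the component is good)
  have hX1 : ∀ jn, jmin ≤ jn → jn ≤ jmax → 1 ≤ xN jn := by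
    intro jn hminle hlemax
    by_contra hx0
    have hxz : XF.filter (fun v => (v.2 : ℕ) = jn) = ∅ := by
      have : xN jn = 0 := by omega
      simpa [hxNdef, Finset.card_eq_zero] using this
    have hjnlt : ℕ := jn
    have hjltℓ : jn < ℓ := by omega
    set j : Fin ℓ := ⟨jn, hjltℓ⟩ with hjdef
    have hcolfree : ∀ i : Fin h, ((i, j) : Fin h × Fin ℓ) ∈ Xᶜ := by
      intro i
      intro hiX
      have : (i, j) ∈ XF.filter (fun v => (v.2 : ℕ) = jn) :=
        Finset.mem_filter.mpr ⟨(hmemXF _).mpr hiX, by simp [hjdef]⟩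
      rw [hxz] at this
      exact absurd this (Finset.notMem_empty _)
    -- find a component vertex in column jn
    have hsn := hS1 jn hminle hlemax
    have hne : (T.filter (fun v => (v.2 : ℕ) = jn)).Nonempty := by
      apply Finset.card_pos.mp
      simpa [hsNdef] using hsn
    obtain ⟨u0, hu0⟩ := hne
    obtain ⟨hu0T, hu0col⟩ := Finset.mem_filter.mp hu0
    obtain ⟨hu0', hu0c⟩ := (hmemT u0).mp hu0T
    have hu0j : u0.2 = j := Fin.ext (by simp [hjdef]; omega)
    apply hgood
    refine ⟨j, fun i => ⟨hcolfree i, ?_⟩⟩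
    have hreach : ((gridGraph h ℓ).induce Xᶜ).Reachable ⟨(i, j), hcolfree i⟩ ⟨(u0.1, j), hcolfree u0.1⟩ :=
      col_reach X j hcolfree i u0.1
    have hu0eq : ((u0.1, j) : Fin h × Fin ℓ) = u0 := by
      rw [← hu0j]
    have hkey : ((gridGraph h ℓ).induce Xᶜ).connectedComponentMk ⟨(u0.1, j), hcolfree u0.1⟩ = c := by
      have heq2 : (⟨(u0.1, j), hcolfree u0.1⟩ : ↥Xᶜ) = ⟨u0, hu0'⟩ := Subtype.ext hu0eq
      rw [heq2]
      exact hu0c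
    exact (SimpleGraph.ConnectedComponent.sound hreach).trans hkey
  -- window sums
  set k := jmax + 1 - jmin with hkdef
  have hk1 : 1 ≤ k := by omega
  have hTwindow : T.card = ∑ jn ∈ Finset.Ico jmin (jmax + 1), sN jn := by
    rw [hTsum]
    symm
    apply Finset.sum_subset
    · intro a ha
      have := Finset.mem_Ico.mp ha
      exact Finset.mem_range.mpr (by omega)
    · intro a ha ha'
      have h1 := Finset.mem_range.mp ha
      rw [Finset.mem_Ico] at ha'
      exact hs_zero a (by omega)
  have hfinal : 2 * T.card ≤ (h - 1) * (h + 2) := by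
    by_cases hcase : jmax + 1 < ℓ
    · -- right wall case
      apply le_trans (le_of_eq ?eq1)
        (numeric_lemma h k (fun i => sN (jmin + i)) (fun i => xN (jmin + i)) hk1 (by omega)
          ?hs1 ?hx1 ?hsx ?hchain ?hsk ?hsum)
      case eq1 =>
        congr 1
        rw [hTwindow, Finset.sum_Ico_eq_sum_range]
      case hs1 => intro i hi; exact hS1 (jmin + i) (by omega) (by omega)
      case hx1 => intro i hi; exact hX1 (jmin + i) (by omega) (by omega)
      case hsx => intro i hi; exact hsx (jmin + i) (by omega)
      case hchain =>
        intro i hi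
        show sN (jmin + i) ≤ sN (jmin + (i + 1)) + xN (jmin + (i + 1))
        have he : jmin + (i + 1) = jmin + i + 1 := by omega
        rw [he]
        exact hchainR (jmin + i) (by omega)
      case hsk =>
        show sN (jmin + k) = 0
        exact hs_zero (jmin + k) (by omega)
      case hsum =>
        have heq : ∑ i ∈ Finset.range (k + 1), xN (jmin + i)
            = ∑ jn ∈ Finset.Ico jmin (jmin + (k + 1)), xN jn := by
          rw [Finset.sum_Ico_eq_sum_range]
          have hb : jmin + (k + 1) - jmin = k + 1 := by omega
          rw [hb]
        rw [heq]
        calc ∑ jn ∈ Finset.Ico jmin (jmin + (k + 1)), xN jn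
            ≤ ∑ jn ∈ Finset.range ℓ, xN jn := by
              apply Finset.sum_le_sum_of_subset
              intro a ha
              have := Finset.mem_Ico.mp ha
              exact Finset.mem_range.mpr (by omega)
          _ = XF.card := hXsum.symm
          _ ≤ h + 1 := hXFcard
    · -- left wall case
      have hjmaxeq : jmax + 1 = ℓ := by omega
      have hjmin1 : 1 ≤ jmin := by
        by_contra hjm
        have hjm0 : jmin = 0 := by omega
        have hge : (ℓ : ℕ) ≤ ∑ jn ∈ Finset.range ℓ, xN jn := by
          calc (ℓ : ℕ) = ∑ _jn ∈ Finset.range ℓ, 1 := by simp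
            _ ≤ _ := Finset.sum_le_sum (fun jn hjn => hX1 jn (by omega)
                (by have := Finset.mem_range.mp hjn; omega))
        rw [← hXsum] at hge
        omega
      apply le_trans (le_of_eq ?eq2)
        (numeric_lemma h k (fun i => sN (jmax - i)) (fun i => xN (jmax - i)) hk1 (by omega)
          ?hs1' ?hx1' ?hsx' ?hchain' ?hsk' ?hsum')
      case eq2 =>
        congr 1
        have heq3 : ∑ i ∈ Finset.range k, sN (jmax - i)
            = ∑ i ∈ Finset.range k, sN (jmin + i) := by
          rw [← Finset.sum_range_reflect (fun i => sN (jmin + i)) k]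
          apply Finset.sum_congr rfl
          intro i hi
          have hik := Finset.mem_range.mp hi
          congr 1
          omega
        rw [heq3, hTwindow, Finset.sum_Ico_eq_sum_range]
      case hs1' => intro i hi; exact hS1 (jmax - i) (by omega) (by omega)
      case hx1' => intro i hi; exact hX1 (jmax - i) (by omega) (by omega)
      case hsx' => intro i hi; exact hsx (jmax - i) (by omega)
      case hchain' =>
        intro i hi
        show sN (jmax - i) ≤ sN (jmax - (i + 1)) + xN (jmax - (i + 1))
        have hjj : jmax - i - 1 + 1 < ℓ := by omega
        have hcl := hchainL (jmax - i - 1) hjj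
        have he1 : jmax - i - 1 + 1 = jmax - i := by omega
        have he2 : jmax - (i + 1) = jmax - i - 1 := by omega
        rw [he1] at hcl
        rw [he2]
        exact hcl
      case hsk' =>
        show sN (jmax - k) = 0
        have he3 : jmax - k = jmin - 1 := by omega
        rw [he3]
        exact hs_zero (jmin - 1) (by omega)
      case hsum' =>
        have heq4 : ∑ i ∈ Finset.range (k + 1), xN (jmax - i)
            = ∑ i ∈ Finset.range (k + 1), xN (jmin - 1 + i) := by
          rw [← Finset.sum_range_reflect (fun i => xN (jmin - 1 + i)) (k + 1)]
          apply Finset.sum_congr rfl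
          intro i hi
          have hik := Finset.mem_range.mp hi
          congr 1
          omega
        have heq5 : ∑ i ∈ Finset.range (k + 1), xN (jmin - 1 + i)
            = ∑ jn ∈ Finset.Ico (jmin - 1) (jmin - 1 + (k + 1)), xN jn := by
          rw [Finset.sum_Ico_eq_sum_range]
          have hb : jmin - 1 + (k + 1) - (jmin - 1) = k + 1 := by omega
          rw [hb]
        rw [heq4, heq5]
        calc ∑ jn ∈ Finset.Ico (jmin - 1) (jmin - 1 + (k + 1)), xN jn
            ≤ ∑ jn ∈ Finset.range ℓ, xN jn := by
              apply Finset.sum_le_sum_of_subset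
              intro a ha
              have := Finset.mem_Ico.mp ha
              exact Finset.mem_range.mpr (by omega)
          _ = XF.card := hXsum.symm
          _ ≤ h + 1 := hXFcard
  rw [hcardT] at hsize
  omega
end

section
/- Let 1 < h < ℓ - 2 and let X be a set of at most h+1 vertices of the (h×ℓ)-grid such that no component of G(h,ℓ) \ X is good except one component C' containing column j, and let C be a non-good component all of whose columns lie strictly left of j. Then for every 1 ≤ i < h, C intersects at most i+1 columns in at least h-i vertices each. -/
lemma grid_adj_vert_s7 {h ℓ : ℕ} {i₁ i₂ : Fin h} {j₀ : Fin ℓ}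
    (hd : (i₂ : ℕ) = (i₁ : ℕ) + 1) :
    (gridGraph h ℓ).Adj (i₁, j₀) (i₂, j₀) := by
  rw [gridGraph, SimpleGraph.fromRel_adj]
  refine ⟨?_, Or.inl ?_⟩
  · intro hcon
    rw [Prod.mk.injEq] at hcon
    have := congrArg Fin.val hcon.1
    omega
  · push_cast
    omega

lemma grid_adj_horiz_s7 {h ℓ : ℕ} {i₀ : Fin h} {j₁ j₂ : Fin ℓ}
    (hd : (j₂ : ℕ) = (j₁ : ℕ) + 1) :
    (gridGraph h ℓ).Adj (i₀, j₁) (i₀, j₂) := by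
  rw [gridGraph, SimpleGraph.fromRel_adj]
  refine ⟨?_, Or.inl ?_⟩
  · intro hcon
    rw [Prod.mk.injEq] at hcon
    have := congrArg Fin.val hcon.2
    omega
  · push_cast
    omega

lemma induce_adj_of_grid {h ℓ : ℕ} {X : Set (Fin h × Fin ℓ)} {u v : ↥Xᶜ}
    (hadj : (gridGraph h ℓ).Adj u.val v.val) :
    ((gridGraph h ℓ).induce Xᶜ).Adj u v := by
  simpa using hadj

lemma reach_in_column {h ℓ : ℕ} {X : Set (Fin h × Fin ℓ)} {col : Fin ℓ}
    (hcol : ∀ r : Fin h, ((r, col) : Fin h × Fin ℓ) ∈ Xᶜ) (a b : Fin h) :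
    ((gridGraph h ℓ).induce Xᶜ).Reachable ⟨(a, col), hcol a⟩ ⟨(b, col), hcol b⟩ := by
  have hpos : 0 < h := a.pos
  have H : ∀ n : ℕ, ∀ hn : n < h,
      ((gridGraph h ℓ).induce Xᶜ).Reachable ⟨((⟨0, hpos⟩ : Fin h), col), hcol _⟩
        ⟨((⟨n, hn⟩ : Fin h), col), hcol _⟩ := by
    intro n
    induction n with
    | zero => intro hn; exact SimpleGraph.Reachable.refl _
    | succ m ih =>
      intro hn
      refine (ih (by omega)).trans ?_
      exact SimpleGraph.Adj.reachable (induce_adj_of_grid (grid_adj_vert_s7 rfl))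
  have ha := H a.val a.isLt
  have hb := H b.val b.isLt
  have ha' : (⟨a.val, a.isLt⟩ : Fin h) = a := rfl
  simp only [Fin.eta] at ha hb
  exact ha.symm.trans hb

/-- For `1 < h < ℓ - 2` and `X` of size at most `h+1`: if the only good
component of `G(h,ℓ) \ X` is `c'`, containing the full column `j`, and `c` is
a non-good component all of whose columns lie strictly left of `j`, then for
every `1 ≤ i < h`, `c` intersects at most `i+1` columns in at least `h-i`
vertices each. -/
theorem grid_nongood_component_columns (h ℓ : ℕ) (h1 : 1 < h) (h2 : h + 2 < ℓ)
    (X : Set (Fin h × Fin ℓ)) (hX : X.ncard ≤ h + 1)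
    (c' : ((gridGraph h ℓ).induce Xᶜ).ConnectedComponent) (j : Fin ℓ)
    (hc' : ∀ i : Fin h, ∃ hm : ((i, j) : Fin h × Fin ℓ) ∈ Xᶜ,
      ((gridGraph h ℓ).induce Xᶜ).connectedComponentMk ⟨(i, j), hm⟩ = c')
    (huniq : ∀ c : ((gridGraph h ℓ).induce Xᶜ).ConnectedComponent, GoodComp X c → c = c')
    (c : ((gridGraph h ℓ).induce Xᶜ).ConnectedComponent) (hc : ¬ GoodComp X c)
    (hleft : ∀ v : ↥Xᶜ, ((gridGraph h ℓ).induce Xᶜ).connectedComponentMk v = c →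
      (v.val.2 : ℕ) < (j : ℕ)) :
    ∀ i : ℕ, 1 ≤ i → i < h →
      Set.ncard {col : Fin ℓ |
          h - i ≤ Set.ncard {v : ↥Xᶜ |
            ((gridGraph h ℓ).induce Xᶜ).connectedComponentMk v = c ∧ v.val.2 = col}}
        ≤ i + 1 := by
  intro i hi1 hi2
  by_contra hcon
  push_neg at hcon
  set S : Set (Fin ℓ) := {col : Fin ℓ |
      h - i ≤ Set.ncard {v : ↥Xᶜ |
        ((gridGraph h ℓ).induce Xᶜ).connectedComponentMk v = c ∧ v.val.2 = col}} with hSdef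
  have hScard : i + 2 ≤ S.ncard := hcon
  have hSfin : S.Finite := Set.toFinite _
  -- each column of S contains a vertex of c
  have hmem : ∀ col ∈ S, ∃ v : ↥Xᶜ,
      ((gridGraph h ℓ).induce Xᶜ).connectedComponentMk v = c ∧ v.val.2 = col := by
    intro col hcolS
    have h0 : h - i ≤ Set.ncard {v : ↥Xᶜ |
        ((gridGraph h ℓ).induce Xᶜ).connectedComponentMk v = c ∧ v.val.2 = col} := hcolS
    have : ({v : ↥Xᶜ |
        ((gridGraph h ℓ).induce Xᶜ).connectedComponentMk v = c ∧ v.val.2 = col}).Nonempty := by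
      apply Set.nonempty_of_ncard_ne_zero
      omega
    exact this
  -- S is nonempty; take its maximum column
  have hSne : S.Nonempty := Set.nonempty_of_ncard_ne_zero (by omega)
  have hSne' : hSfin.toFinset.Nonempty := by
    rwa [Set.Finite.toFinset_nonempty]
  set cmax : Fin ℓ := hSfin.toFinset.max' hSne' with hcmaxdef
  have hcmaxS : cmax ∈ S := by
    have := hSfin.toFinset.max'_mem hSne'
    rwa [Set.Finite.mem_toFinset] at this
  have hle : ∀ col ∈ S, (col : ℕ) ≤ (cmax : ℕ) := by
    intro col hcolS
    exact Finset.le_max' _ col (by rwa [Set.Finite.mem_toFinset])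
  -- every column of S contains a vertex of X
  have hXcol : ∀ col ∈ S, ∃ x ∈ X, x.2 = col := by
    intro col hcolS
    by_contra hno
    push_neg at hno
    have hcolfree : ∀ r : Fin h, ((r, col) : Fin h × Fin ℓ) ∈ Xᶜ := by
      intro r hrx
      exact hno _ hrx rfl
    obtain ⟨⟨⟨r0, c0⟩, hm0⟩, hvc, hvcol⟩ := hmem col hcolS
    simp only at hvcol
    subst hvcol
    apply hc
    refine ⟨c0, fun r => ⟨hcolfree r, ?_⟩⟩
    have hreach := reach_in_column hcolfree r r0
    have : ((gridGraph h ℓ).induce Xᶜ).connectedComponentMk ⟨(r, c0), hcolfree r⟩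
        = ((gridGraph h ℓ).induce Xᶜ).connectedComponentMk ⟨(r0, c0), hcolfree r0⟩ :=
      SimpleGraph.ConnectedComponent.sound hreach
    rw [this]
    exact hvc
  -- horizontal exit: from a vertex of c in column cmax, walking right we hit X
  have hexit : ∀ (r : Fin h) (hm : ((r, cmax) : Fin h × Fin ℓ) ∈ Xᶜ),
      ((gridGraph h ℓ).induce Xᶜ).connectedComponentMk ⟨(r, cmax), hm⟩ = c →
      ∃ x ∈ X, x.1 = r ∧ (cmax : ℕ) < (x.2 : ℕ) := by
    intro r hm hmk
    have hcmaxj : (cmax : ℕ) < (j : ℕ) := hleft ⟨(r, cmax), hm⟩ hmk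
    have claim : ∀ n : ℕ, (cmax : ℕ) + n ≤ (j : ℕ) →
        (∃ x ∈ X, x.1 = r ∧ (cmax : ℕ) < (x.2 : ℕ)) ∨
        ∃ v : ↥Xᶜ, ((gridGraph h ℓ).induce Xᶜ).connectedComponentMk v = c ∧
          v.val.1 = r ∧ (v.val.2 : ℕ) = (cmax : ℕ) + n := by
      intro n
      induction n with
      | zero =>
        intro _
        exact Or.inr ⟨⟨(r, cmax), hm⟩, hmk, rfl, by simp⟩
      | succ m ih =>
        intro hnl
        rcases ih (by omega) with hdone | ⟨⟨⟨r0, c0⟩, hm0⟩, hvc, hv1, hv2⟩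
        · exact Or.inl hdone
        simp only at hv1 hv2
        subst hv1
        have hlt : (cmax : ℕ) + (m + 1) < ℓ := lt_of_le_of_lt hnl j.isLt
        set w : Fin h × Fin ℓ := (r0, ⟨(cmax : ℕ) + (m + 1), hlt⟩) with hwdef
        by_cases hwX : w ∈ X
        · exact Or.inl ⟨w, hwX, rfl, by simp [hwdef]⟩
        · have hwc : w ∈ Xᶜ := hwX
          have hadj : ((gridGraph h ℓ).induce Xᶜ).Adj ⟨(r0, c0), hm0⟩ ⟨w, hwc⟩ :=
            induce_adj_of_grid (grid_adj_horiz_s7 (by simp [hwdef]; omega))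
          refine Or.inr ⟨⟨w, hwc⟩, ?_, rfl, by simp [hwdef]⟩
          rw [← SimpleGraph.ConnectedComponent.sound hadj.reachable]
          exact hvc
    rcases claim ((j : ℕ) - (cmax : ℕ)) (by omega) with hdone | ⟨v, hvc, _, hv2⟩
    · exact hdone
    · have := hleft v hvc
      omega
  -- rows of c in column cmax
  set Vmax : Set ↥Xᶜ := {v : ↥Xᶜ |
      ((gridGraph h ℓ).induce Xᶜ).connectedComponentMk v = c ∧ v.val.2 = cmax} with hVdef
  set R : Set (Fin h) := (fun v : ↥Xᶜ => v.val.1) '' Vmax with hRdef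
  have hRcard : R.ncard = Vmax.ncard := by
    apply Set.ncard_image_of_injOn
    intro v hv w hw hvw
    apply Subtype.ext
    have h2v : v.val.2 = cmax := hv.2
    have h2w : w.val.2 = cmax := hw.2
    exact Prod.ext hvw (h2v.trans h2w.symm)
  have hVcard : h - i ≤ Vmax.ncard := hcmaxS
  -- choose X-vertices for columns of S
  have hfex : ∀ col : Fin ℓ, ∃ x : Fin h × Fin ℓ, col ∈ S → (x ∈ X ∧ x.2 = col) := by
    intro col
    by_cases hcs : col ∈ S
    · obtain ⟨x, hx1, hx2⟩ := hXcol col hcs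
      exact ⟨x, fun _ => ⟨hx1, hx2⟩⟩
    · exact ⟨((⟨0, by omega⟩ : Fin h), col), fun hcs' => absurd hcs' hcs⟩
  choose f hf using hfex
  -- choose X-vertices for rows of R
  have hgex : ∀ r : Fin h, ∃ x : Fin h × Fin ℓ,
      r ∈ R → (x ∈ X ∧ x.1 = r ∧ (cmax : ℕ) < (x.2 : ℕ)) := by
    intro r
    by_cases hr : r ∈ R
    · obtain ⟨⟨⟨r0, c0⟩, hm0⟩, hvV, hv1⟩ := hr
      simp only at hv1
      subst hv1
      have h2 : c0 = cmax := hvV.2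
      subst h2
      obtain ⟨x, hx1, hx2, hx3⟩ := hexit r0 hm0 hvV.1
      exact ⟨x, fun _ => ⟨hx1, hx2, hx3⟩⟩
    · exact ⟨((⟨0, by omega⟩ : Fin h), j), fun hr' => absurd hr' hr⟩
  choose g hg using hgex
  -- counting
  set A : Set (Fin h × Fin ℓ) := f '' S with hAdef
  set B : Set (Fin h × Fin ℓ) := g '' R with hBdef
  have hAX : A ⊆ X := by
    rintro x ⟨col, hcolS, rfl⟩
    exact (hf col hcolS).1
  have hBX : B ⊆ X := by
    rintro x ⟨r, hrR, rfl⟩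
    exact (hg r hrR).1
  have hAcard : A.ncard = S.ncard := by
    apply Set.ncard_image_of_injOn
    intro c1 hc1 c2 hc2 hfc
    have e1 := (hf c1 hc1).2
    have e2 := (hf c2 hc2).2
    rw [← e1, ← e2, hfc]
  have hBcard : B.ncard = R.ncard := by
    apply Set.ncard_image_of_injOn
    intro r1 hr1 r2 hr2 hgr
    have e1 := (hg r1 hr1).2.1
    have e2 := (hg r2 hr2).2.1
    rw [← e1, ← e2, hgr]
  have hdisj : Disjoint A B := by
    rw [Set.disjoint_left]
    rintro x ⟨col, hcolS, rfl⟩ ⟨r, hrR, hgr⟩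
    have e1 := (hf col hcolS).2
    have e3 := (hg r hrR).2.2
    have hcl : (col : ℕ) ≤ (cmax : ℕ) := hle col hcolS
    rw [hgr, e1] at e3
    omega
  have hunion : (A ∪ B).ncard = A.ncard + B.ncard :=
    Set.ncard_union_eq hdisj (Set.toFinite _) (Set.toFinite _)
  have hsub : (A ∪ B).ncard ≤ X.ncard :=
    Set.ncard_le_ncard (Set.union_subset hAX hBX) (Set.toFinite _)
  omega
end

section
/- Let G be a connected graph, u, v ∈ V(G), and P a path in G from u to v. Then there exists an isomorphism φ : G_{\{u\}} → G_{\{v\}} such that ρ(φ(w, S)) = w for all vertices (w, S) of G_{\{u\}}, and φ(w, S) = (w, S) whenever w does not lie on P. -/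
/-- The vertices of the CFI-type graph `G_U`: pairs `(v, S)` with `v ∈ V(G)`
and `S` a set of edges of `G` incident to `v` with `|S| ≡ |{v} ∩ U| (mod 2)`. -/
def CFIVert {V : Type*} [DecidableEq V] (G : SimpleGraph V) (U : Finset V) : Type _ :=
  {p : V × Finset (Sym2 V) //
    (∀ e ∈ p.2, e ∈ G.edgeSet ∧ p.1 ∈ e) ∧
    p.2.card % 2 = (if p.1 ∈ U then 1 else 0)}

/-- The CFI-type graph `G_U`: `(v, S)` and `(u, T)` are adjacent iff
`uv ∈ E(G)` and `uv ∉ S △ T`. -/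
def cfiGraph {V : Type*} [DecidableEq V] (G : SimpleGraph V) (U : Finset V) :
    SimpleGraph (CFIVert G U) where
  Adj p q := G.Adj p.val.1 q.val.1 ∧
    (s(p.val.1, q.val.1) ∈ p.val.2 ↔ s(p.val.1, q.val.1) ∈ q.val.2)
  symm := by
    refine ⟨?_⟩
    rintro p q ⟨h1, h2⟩
    refine ⟨h1.symm, ?_⟩
    rw [Sym2.eq_swap]
    exact h2.symm
  loopless := by
    refine ⟨?_⟩
    rintro p ⟨h, -⟩
    exact G.loopless.irrefl _ h

/-!
Twisting the edge sets at every vertex by a fixed set `F` of edges, `(w, S) ↦ (w, S △ F_w)` with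
`F_w` the edges of `F` at `w`, preserves adjacency, since an edge `ww'` lies in `F_w` iff it lies
in `F_{w'}`; it flips the parity of `|S|` exactly where `|F_w|` is odd. For a single edge `ab` this gives
`G_{a} ≃ G_{b}` fixing everything away from `a` and `b`, and composing these along the path moves
the odd vertex from `u` to `v` while only touching vertices of the path.
-/

open Finset
open scoped symmDiff

theorem Finset.card_symmDiff_add_two_mul_card_inter {α : Type*} [DecidableEq α]
    (s t : Finset α) : #(s ∆ t) + 2 * #(s ∩ t) = #s + #t := by
  have hsub : s ∩ t ⊆ s ∪ t := inter_subset_left.trans subset_union_left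
  have hle := card_le_card hsub
  rw [symmDiff_eq_sup_sdiff_inf, sup_eq_union, inf_eq_inter, card_sdiff_of_subset hsub,
    ← card_union_add_card_inter s t]
  omega

section

variable {V : Type*} [DecidableEq V] {G : SimpleGraph V} {U U' : Finset V}

namespace CFIVert

abbrev edgesAt (F : Finset (Sym2 V)) (w : V) : Finset (Sym2 V) := {e ∈ F | w ∈ e}

/-- Adding the edges of `F` at every vertex turns the odd vertices `U` into `U'`. -/
def ShiftsParity (F : Finset (Sym2 V)) (U U' : Finset V) : Prop :=
  ∀ w, (#(edgesAt F w) + if w ∈ U then 1 else 0) % 2 = if w ∈ U' then 1 else 0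

theorem ShiftsParity.symm {F : Finset (Sym2 V)} (h : ShiftsParity F U U') :
    ShiftsParity F U' U := fun w => by
  have := h w
  split_ifs at * <;> omega

theorem shiftsParity_edge {a b : V} (hab : a ≠ b) :
    ShiftsParity {s(a, b)} {a} {b} := fun w => by
  by_cases hwa : w = a <;> by_cases hwb : w = b <;> simp_all [filter_singleton]

def twist (F : Finset (Sym2 V)) (hF : ↑F ⊆ G.edgeSet) (hpar : ShiftsParity F U U')
    (x : CFIVert G U) : CFIVert G U' :=
  ⟨(x.val.1, x.val.2 ∆ edgesAt F x.val.1), by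
    obtain ⟨⟨w, S⟩, hS, hSpar⟩ := x
    refine ⟨fun e he => ?_, ?_⟩
    · rcases mem_symmDiff.1 he with ⟨he, -⟩ | ⟨he, -⟩
      · exact hS e he
      · exact ⟨hF (mem_filter.1 he).1, (mem_filter.1 he).2⟩
    · have hcard := card_symmDiff_add_two_mul_card_inter S (edgesAt F w)
      have := hpar w
      dsimp only at hSpar ⊢
      omega⟩

end CFIVert

open CFIVert

def cfiTwist (F : Finset (Sym2 V)) (hF : ↑F ⊆ G.edgeSet) (hpar : ShiftsParity F U U') :
    cfiGraph G U ≃g cfiGraph G U' where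
  toFun := twist F hF hpar
  invFun := twist F hF hpar.symm
  left_inv x := Subtype.ext <| Prod.ext rfl (symmDiff_symmDiff_cancel_right _ _)
  right_inv x := Subtype.ext <| Prod.ext rfl (symmDiff_symmDiff_cancel_right _ _)
  map_rel_iff' {x y : CFIVert G U} := by
    have hx : s(x.val.1, y.val.1) ∈ edgesAt F x.val.1 ↔ s(x.val.1, y.val.1) ∈ F := by simp
    have hy : s(x.val.1, y.val.1) ∈ edgesAt F y.val.1 ↔ s(x.val.1, y.val.1) ∈ F := by simp
    change (G.Adj x.val.1 y.val.1 ∧ (s(x.val.1, y.val.1) ∈ x.val.2 ∆ edgesAt F x.val.1 ↔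
      s(x.val.1, y.val.1) ∈ y.val.2 ∆ edgesAt F y.val.1)) ↔ (G.Adj x.val.1 y.val.1 ∧
      (s(x.val.1, y.val.1) ∈ x.val.2 ↔ s(x.val.1, y.val.1) ∈ y.val.2))
    simp only [mem_symmDiff, hx, hy]
    tauto

@[simp]
theorem cfiTwist_apply_val (F : Finset (Sym2 V)) (hF : ↑F ⊆ G.edgeSet)
    (hpar : ShiftsParity F U U') (x : CFIVert G U) :
    (cfiTwist F hF hpar x).val = (x.val.1, x.val.2 ∆ edgesAt F x.val.1) :=
  rfl

def cfiEdgeTwist {a b : V} (hab : G.Adj a b) : cfiGraph G {a} ≃g cfiGraph G {b} :=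
  cfiTwist {s(a, b)} (by simpa using hab) (shiftsParity_edge hab.ne)

theorem cfiEdgeTwist_apply_val_fst {a b : V} (hab : G.Adj a b) (x : CFIVert G {a}) :
    (cfiEdgeTwist hab x).val.1 = x.val.1 :=
  rfl

theorem cfiEdgeTwist_apply_of_notMem {a b : V} (hab : G.Adj a b) {x : CFIVert G {a}}
    (hx : x.val.1 ∉ s(a, b)) : (cfiEdgeTwist hab x).val = x.val := by
  have hempty : edgesAt {s(a, b)} x.val.1 = ∅ := by simp [filter_singleton, hx]
  rw [cfiEdgeTwist, cfiTwist_apply_val, hempty, ← bot_eq_empty, symmDiff_bot]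

def cfiWalkTwist : {u v : V} → G.Walk u v → (cfiGraph G {u} ≃g cfiGraph G {v})
  | _, _, .nil => .refl
  | _, _, .cons h p => (cfiEdgeTwist h).trans (cfiWalkTwist p)

theorem cfiWalkTwist_apply_val_fst {u v : V} (P : G.Walk u v) (x : CFIVert G {u}) :
    (cfiWalkTwist P x).val.1 = x.val.1 := by
  induction P with
  | nil => rfl
  | cons h p ih => exact (ih _).trans (cfiEdgeTwist_apply_val_fst h x)

theorem cfiWalkTwist_apply_of_notMem_support {u v : V} (P : G.Walk u v) {x : CFIVert G {u}}
    (hx : x.val.1 ∉ P.support) : (cfiWalkTwist P x).val = x.val := by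
  induction P with
  | nil => rfl
  | @cons a b _ h p ih =>
    simp only [SimpleGraph.Walk.support_cons, List.mem_cons, not_or] at hx
    have hxb : x.val.1 ≠ b := fun hb => hx.2 (hb ▸ p.start_mem_support)
    have hfix := cfiEdgeTwist_apply_of_notMem h (x := x) (by simp [Sym2.mem_iff, hx.1, hxb])
    change (cfiWalkTwist p (cfiEdgeTwist h x)).val = x.val
    rw [ih (by rw [cfiEdgeTwist_apply_val_fst]; exact hx.2), hfix]

end

theorem cfi_shift_twist_along_path_general {V : Type*} [DecidableEq V]
    (G : SimpleGraph V) (u v : V)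
    (P : G.Walk u v) :
    ∃ φ : cfiGraph G {u} ≃g cfiGraph G {v},
      (∀ x : CFIVert G {u}, ((φ x) : CFIVert G {v}).val.1 = x.val.1) ∧
      ∀ x : CFIVert G {u}, x.val.1 ∉ P.support → ((φ x) : CFIVert G {v}).val = x.val :=
  ⟨cfiWalkTwist P, cfiWalkTwist_apply_val_fst P, fun _ => cfiWalkTwist_apply_of_notMem_support P⟩

/-- For a connected graph `G`, vertices `u, v` and a path `P` from `u` to `v`
in `G`, there is an isomorphism `φ : G_{{u}} ≃g G_{{v}}` with
`ρ(φ(w, S)) = w` for all vertices `(w, S)`, and `φ(w, S) = (w, S)` whenever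
`w` does not lie on `P`. -/
theorem cfi_shift_twist_along_path {V : Type*} [DecidableEq V] [Fintype V]
    (G : SimpleGraph V) (hG : G.Connected) (u v : V)
    (P : G.Walk u v) (hP : P.IsPath) :
    ∃ φ : cfiGraph G {u} ≃g cfiGraph G {v},
      (∀ x : CFIVert G {u}, ((φ x) : CFIVert G {v}).val.1 = x.val.1) ∧
      ∀ x : CFIVert G {u}, x.val.1 ∉ P.support → ((φ x) : CFIVert G {v}).val = x.val :=
  cfi_shift_twist_along_path_general G u v P
end

section
/- Let (T, r, β, γ) be a pre-tree-decomposition of a graph G and let (T', r') be a subtree of (T, r) all of whose edges are exact, with r' its minimal node. Then for every vertex v of G, the set of nodes t ∈ V(T') with v ∈ Δ(π_t) induces a connected subgraph of T'. Consequently, if r = r', then for every t ∈ V(T'), the sum over nodes s with r ≺ s ⪯ t of |Δ(π_s) \ Δ(π_{p_s})| equals |∪_{s ⪯ t} Δ(π_s)|. -/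
/-- The boundary `Δ(X)` of a set `X` of edges of `G`: vertices incident both
to an edge in `X` and to an edge of `G` not in `X`. -/
def edgeBoundary {V : Type*} (G : SimpleGraph V) (X : Set (Sym2 V)) : Set V :=
  {v | (∃ e ∈ X, v ∈ e) ∧ ∃ e' ∈ G.edgeSet \ X, v ∈ e'}

/-- A node of a rooted tree is a leaf if it is not the root and has at most
one neighbour. -/
def IsLeafAt {T : Type*} (TG : SimpleGraph T) (r t : T) : Prop :=
  t ≠ r ∧ ∀ s s', TG.Adj t s → TG.Adj t s' → s = s'

/-- A rooted pre-tree-decomposition of a graph `G`: a rooted tree `(T, r)`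
with bags `β : V(T) → 2^{V(G)}` and cones `γ` on directed tree edges,
satisfying (PD.1)–(PD.4). -/
structure PreTreeDec {V : Type*} (G : SimpleGraph V) where
  T : Type
  TFin : Fintype T
  TG : SimpleGraph T
  isTree : TG.IsTree
  r : T
  bag : T → Set V
  cone : T → T → Set (Sym2 V)
  cone_subset : ∀ s t, TG.Adj s t → cone s t ⊆ G.edgeSet
  /-- (PD.1) the root has an empty bag, and for every connected component of
  `G` there is a child of the root whose cone is the edge set of that
  component. -/
  root_bag : bag r = ∅
  root_components : ∀ c : G.ConnectedComponent, ∃ t, TG.Adj r t ∧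
    cone r t = {e | e ∈ G.edgeSet ∧ ∀ v ∈ e, G.connectedComponentMk v = c}
  /-- (PD.2) cones pointing to leaves contain at most one edge. -/
  leaf_small : ∀ t ℓ, IsLeafAt TG r ℓ → TG.Adj t ℓ → (cone t ℓ).Subsingleton
  /-- (PD.3) at every node the cones towards the neighbours are pairwise
  disjoint; at internal nodes they cover `E(G)`; their boundary is contained
  in the bag. -/
  part_disjoint : ∀ t s s', TG.Adj t s → TG.Adj t s' → s ≠ s' →
    Disjoint (cone t s) (cone t s')
  part_cover : ∀ t, ¬ IsLeafAt TG r t → (⋃ s ∈ {s | TG.Adj t s}, cone t s) = G.edgeSet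
  boundary_bag : ∀ t s, TG.Adj t s → edgeBoundary G (cone t s) ⊆ bag t
  /-- (PD.4) the two cones of an edge are disjoint. -/
  opp_disjoint : ∀ s t, TG.Adj s t → Disjoint (cone s t) (cone t s)

/-- An edge `st` of a pre-tree-decomposition is exact if its two cones
partition `E(G)`. -/
def PreTreeDec.Exact {V : Type*} {G : SimpleGraph V} (D : PreTreeDec G) (s t : D.T) : Prop :=
  D.cone s t ∪ D.cone t s = G.edgeSet

/-- The ancestor order on the rooted tree of a pre-tree-decomposition:
`u ⪯ v` iff `u` lies on every walk from the root to `v` (equivalently, on the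
unique path from `r` to `v`). -/
def PreTreeDec.anc {V : Type*} {G : SimpleGraph V} (D : PreTreeDec G) (u v : D.T) : Prop :=
  ∀ p : D.TG.Walk D.r v, u ∈ p.support

/-- The boundary `Δ(π_t)` of the ordered partition of `E(G)` given by the
cones at node `t`. -/
def PreTreeDec.bnd {V : Type*} {G : SimpleGraph V} (D : PreTreeDec G) (t : D.T) : Set V :=
  {v | ∃ s, D.TG.Adj t s ∧ v ∈ edgeBoundary G (D.cone t s)}

/-!
Across an exact edge `ac` the two cones are complementary in `E(G)`, so they have the same
boundary. If `v ∈ Δ(π_a)` is not on the boundary of `γ(a, c)`, then every edge at `v` lies in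
`γ(c, a)`; along a path `a, c, d, …` of exact edges the cones nest, `γ(c, a) ⊆ γ(d, c) ⊆ ⋯`, so
`v` lies in no later `Δ(π_·)`. Hence the nodes of the subtree whose boundary contains `v` are
closed under taking paths between them, and so induce a connected subgraph. Applied to the path
from the root, this gives `Δ(π_t) \ ⋃_{s ≺ t} Δ(π_s) = Δ(π_t) \ Δ(π_{p_t})`, and the sum
telescopes. The boundaries are finite: a cone pointing away from the root is covered by the
cones one level further down, and at the leaves these hold at most one edge.
-/

open SimpleGraph Walk

lemma edgeBoundary_edgeSet_diff {V : Type*} {G : SimpleGraph V} {X : Set (Sym2 V)}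
    (hX : X ⊆ G.edgeSet) : edgeBoundary G (G.edgeSet \ X) = edgeBoundary G X := by
  ext v
  simp only [edgeBoundary, Set.mem_ofPred_eq, Set.sdiff_sdiff_cancel_left hX]
  exact and_comm

lemma SimpleGraph.Reachable.exists_isPath_of_induce {T : Type*} {H : SimpleGraph T}
    {S : Set T} {a b : S} (h : (H.induce S).Reachable a b) :
    ∃ p : H.Walk a b, p.IsPath ∧ ∀ u ∈ p.support, u ∈ S := by
  classical
  obtain ⟨p⟩ := h
  set w := p.map (Embedding.induce S).toHom with hw
  refine ⟨w.bypass, w.bypass_isPath, fun u hu => ?_⟩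
  have hu' : u ∈ w.support := w.support_bypass_subset_support hu
  rw [hw, Walk.support_map] at hu'
  obtain ⟨x, -, rfl⟩ := List.mem_map.mp hu'
  exact x.2

namespace PreTreeDec

variable {V : Type*} {G : SimpleGraph V} (D : PreTreeDec G)

def ExactOn (S : Set D.T) : Prop :=
  ∀ s ∈ S, ∀ t ∈ S, D.TG.Adj s t → D.Exact s t

lemma cone_subset_biUnion_cone {t s : D.T} (hts : D.TG.Adj t s)
    (hs : ¬ IsLeafAt D.TG D.r s) :
    D.cone t s ⊆ ⋃ x ∈ {x | D.TG.Adj s x ∧ x ≠ t}, D.cone s x := by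
  intro e he
  have hcover : e ∈ ⋃ x ∈ {x | D.TG.Adj s x}, D.cone s x :=
    D.part_cover s hs ▸ D.cone_subset t s hts he
  simp only [Set.mem_iUnion, Set.mem_ofPred_eq, exists_prop] at hcover ⊢
  obtain ⟨x, hsx, hex⟩ := hcover
  exact ⟨x, ⟨hsx, fun hxt => Set.disjoint_left.mp (D.opp_disjoint t s hts) he (hxt ▸ hex)⟩,
    hex⟩

theorem finite_cone_of_isPath {t s : D.T} (p : D.TG.Walk D.r t) (hp : p.IsPath)
    (hts : D.TG.Adj t s) (hs : s ∉ p.support) : (D.cone t s).Finite := by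
  let := D.TFin
  by_cases hleaf : IsLeafAt D.TG D.r s
  · exact (D.leaf_small t s hleaf hts).finite
  refine ((Set.toFinite _).biUnion fun x hx => ?_).subset (D.cone_subset_biUnion_cone hts hleaf)
  have hp' := hp.concat hs hts
  have hx' : x ∉ (p.concat hts).support := fun hx' => hx.2 <| by
    simpa using D.isTree.isAcyclic.eq_penultimate_of_adj_end hp' hx.1 hx'
  exact finite_cone_of_isPath (p.concat hts) hp' hx.1 hx'
termination_by @Fintype.card D.T D.TFin - p.length
decreasing_by
  have := @IsPath.length_lt _ _ D.TFin _ _ _ hp'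
  simp only [length_concat] at this ⊢
  omega

lemma finite_edgeSet (D : PreTreeDec G) : G.edgeSet.Finite := by
  let := D.TFin
  rw [← D.part_cover D.r fun h => h.1 rfl]
  exact (Set.toFinite _).biUnion fun s hs =>
    D.finite_cone_of_isPath nil IsPath.nil hs (by simpa using hs.ne')

lemma finite_bnd (t : D.T) : (D.bnd t).Finite := by
  classical
  refine (D.finite_edgeSet.biUnion fun e _ => e.toFinset.finite_toSet).subset ?_
  rintro v ⟨s, -, -, e, he, hve⟩
  exact Set.mem_biUnion he.1 (Sym2.mem_toFinset.mpr hve)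

lemma bnd_root : D.bnd D.r = ∅ :=
  Set.eq_empty_of_forall_notMem fun _ ⟨s, hs, hv⟩ => by
    simpa [D.root_bag] using D.boundary_bag D.r s hs hv

lemma cone_eq_edgeSet_diff {a c : D.T} (h : D.TG.Adj a c) (hex : D.Exact a c) :
    D.cone c a = G.edgeSet \ D.cone a c := by
  rw [← hex, Set.union_sdiff_left, (D.opp_disjoint a c h).symm.sdiff_eq_left]

lemma edgeBoundary_cone_comm {a c : D.T} (h : D.TG.Adj a c) (hex : D.Exact a c) :
    edgeBoundary G (D.cone c a) = edgeBoundary G (D.cone a c) := by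
  rw [D.cone_eq_edgeSet_diff h hex, edgeBoundary_edgeSet_diff (D.cone_subset a c h)]

lemma cone_subset_cone {p c d : D.T} (hpc : D.TG.Adj p c) (hcd : D.TG.Adj c d) (hpd : p ≠ d)
    (hex : D.Exact c d) : D.cone c p ⊆ D.cone d c := by
  rw [D.cone_eq_edgeSet_diff hcd hex]
  exact fun e he => ⟨D.cone_subset c p hpc.symm he,
    Set.disjoint_left.mp (D.part_disjoint c p d hpc.symm hcd hpd) he⟩

lemma notMem_bnd_of_incidenceSet_subset {c x : D.T} (h : D.TG.Adj c x) {v : V}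
    (hv : G.incidenceSet v ⊆ D.cone c x) : v ∉ D.bnd c := by
  rintro ⟨y, hcy, ⟨e₁, he₁, hve₁⟩, e₂, he₂, hve₂⟩
  by_cases hyx : y = x
  · subst hyx
    exact he₂.2 (hv ⟨he₂.1, hve₂⟩)
  · exact Set.disjoint_left.mp (D.part_disjoint c y x hcy h hyx) he₁
      (hv ⟨D.cone_subset c y hcy he₁, hve₁⟩)

lemma incidenceSet_subset_cone {a c : D.T} (h : D.TG.Adj a c) (hex : D.Exact a c) {v : V}
    (hv : v ∈ D.bnd a) (hnv : v ∉ edgeBoundary G (D.cone a c)) :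
    G.incidenceSet v ⊆ D.cone c a := by
  rw [D.cone_eq_edgeSet_diff h hex]
  rintro e ⟨heE, hve⟩
  refine ⟨heE, fun he => hnv ⟨⟨e, he, hve⟩, ?_⟩⟩
  by_contra! hout
  exact D.notMem_bnd_of_incidenceSet_subset h
    (fun e' ⟨he', hve'⟩ => by_contra fun hn => hout e' ⟨he', hn⟩ hve') hv

variable {D} {S : Set D.T}

lemma notMem_bnd_of_incidenceSet_subset_of_isPath (hS : D.ExactOn S) {v : V} {p c b : D.T}
    (h : D.TG.Adj p c) (w : D.TG.Walk c b) (hw : (cons h w).IsPath)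
    (hwS : ∀ u ∈ (cons h w).support, u ∈ S) (hv : G.incidenceSet v ⊆ D.cone c p) :
    v ∉ D.bnd b := by
  induction w generalizing p with
  | nil => exact D.notMem_bnd_of_incidenceSet_subset h.symm hv
  | @cons c d b hcd w ih =>
    have hpd : p ≠ d := fun hpd => ((cons_isPath_iff _ _).mp hw).2 (by simp [hpd])
    have hex := hS c (hwS c (by simp)) d (hwS d (by simp)) hcd
    exact ih hcd hw.of_cons (fun u hu => hwS u (List.mem_cons_of_mem _ hu))
      (hv.trans (D.cone_subset_cone h hcd hpd hex))

lemma mem_bnd_of_mem_support (hS : D.ExactOn S) {v : V} {a b : D.T} (w : D.TG.Walk a b)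
    (hw : w.IsPath) (hwS : ∀ u ∈ w.support, u ∈ S) (ha : v ∈ D.bnd a) (hb : v ∈ D.bnd b) :
    ∀ u ∈ w.support, v ∈ D.bnd u := by
  induction w with
  | nil => simpa using ha
  | @cons a d b had w ih =>
    have hd : v ∈ D.bnd d := by
      have hex := hS a (hwS a (by simp)) d (hwS d (by simp)) had
      by_cases hva : v ∈ edgeBoundary G (D.cone a d)
      · exact ⟨a, had.symm, (D.edgeBoundary_cone_comm had hex).symm ▸ hva⟩
      · exact absurd hb (notMem_bnd_of_incidenceSet_subset_of_isPath hS had w hw hwS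
          (D.incidenceSet_subset_cone had hex ha hva))
    simp only [support_cons, List.mem_cons, forall_eq_or_imp]
    exact ⟨ha, ih hw.of_cons (fun u hu => hwS u (List.mem_cons_of_mem _ hu)) hd hb⟩

theorem preconnected_induce_bnd (hconn : (D.TG.induce S).Preconnected) (hS : D.ExactOn S)
    (v : V) : (D.TG.induce {t | t ∈ S ∧ v ∈ D.bnd t}).Preconnected := by
  rintro ⟨a, haS, hva⟩ ⟨b, hbS, hvb⟩
  obtain ⟨w, hw, hwS⟩ := (hconn ⟨a, haS⟩ ⟨b, hbS⟩).exists_isPath_of_induce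
  exact (w.induce {t | t ∈ S ∧ v ∈ D.bnd t} fun u hu =>
    ⟨hwS u hu, mem_bnd_of_mem_support hS w hw hwS hva hvb u hu⟩).reachable

variable (D) in
lemma anc_iff_mem_support {s t : D.T} {q : D.TG.Walk t D.r} (hq : q.IsPath) :
    D.anc s t ↔ s ∈ q.support := by
  classical
  refine ⟨fun h => by simpa using h q.reverse, fun h w => w.support_bypass_subset_support ?_⟩
  have hw : w.bypass = q.reverse := congrArg Subtype.val
    ((D.isTree.isAcyclic.subsingleton_path _ _).elim ⟨_, w.bypass_isPath⟩ ⟨_, hq.reverse⟩)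
  simpa [hw] using h

variable (D) in
lemma setOf_parent_eq {t d : D.T} (h : D.TG.Adj t d) {q : D.TG.Walk d D.r}
    (hq : (cons h q).IsPath) : {p | D.TG.Adj p t ∧ D.anc p t ∧ p ≠ t} = {d} := by
  ext p
  rw [Set.mem_ofPred_eq, D.anc_iff_mem_support hq, Set.mem_singleton_iff]
  constructor
  · rintro ⟨hpt, hp, -⟩
    simpa using D.isTree.isAcyclic.eq_snd_of_adj_start hq hpt.symm hp
  · rintro rfl
    exact ⟨h.symm, by simp, h.ne'⟩

lemma bnd_diff_biUnion_support (hS : D.ExactOn S) {t d : D.T} (h : D.TG.Adj t d)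
    {q : D.TG.Walk d D.r} (hq : (cons h q).IsPath) (hqS : ∀ u ∈ (cons h q).support, u ∈ S) :
    D.bnd t \ ⋃ s ∈ {s | s ∈ q.support}, D.bnd s = D.bnd t \ D.bnd d := by
  classical
  refine subset_antisymm
    (Set.sdiff_subset_sdiff_right (Set.subset_biUnion_of_mem (u := D.bnd) q.start_mem_support)) ?_
  rintro v ⟨hvt, hvd⟩
  refine ⟨hvt, fun hvU => hvd ?_⟩
  obtain ⟨s, hs, hvs⟩ := Set.mem_iUnion₂.mp hvU
  have hsub : (cons h (q.takeUntil s hs)).support ⊆ (cons h q).support := by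
    simpa using List.cons_subset_cons t (q.support_takeUntil_subset_support hs)
  have hw : (cons h (q.takeUntil s hs)).IsPath :=
    (hq.of_cons.takeUntil hs).cons fun ht => ((cons_isPath_iff _ _).mp hq).2
      (q.support_takeUntil_subset_support hs ht)
  exact mem_bnd_of_mem_support hS _ hw (fun u hu => hqS u (hsub hu)) hvt hvs d (by simp)

theorem finsum_ncard_bnd_diff_eq_of_isPath (hS : D.ExactOn S) {t : D.T} (q : D.TG.Walk t D.r)
    (hq : q.IsPath) (hqS : ∀ u ∈ q.support, u ∈ S) :
    (∑ᶠ s ∈ {s | s ∈ q.support ∧ s ≠ D.r},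
      (D.bnd s \ ⋃ p ∈ {p | D.TG.Adj p s ∧ D.anc p s ∧ p ≠ s}, D.bnd p).ncard) =
    (⋃ s ∈ {s | s ∈ q.support}, D.bnd s).ncard := by
  cases q with
  | nil => simp [D.bnd_root]
  | cons h q =>
    have htq : t ∉ q.support := ((cons_isPath_iff _ _).mp hq).2
    have htr : t ≠ D.r := fun htr => htq (htr ▸ q.end_mem_support)
    have hA : {s | s ∈ (cons h q).support ∧ s ≠ D.r} =
        insert t {s | s ∈ q.support ∧ s ≠ D.r} := by
      ext s
      by_cases hst : s = t <;> simp [hst, htr]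
    have hB : {s | s ∈ (cons h q).support} = insert t {s | s ∈ q.support} := by
      ext s
      simp
    have hU : (⋃ s ∈ {s | s ∈ q.support}, D.bnd s).Finite :=
      q.support.finite_toSet.biUnion fun s _ => D.finite_bnd s
    rw [hA, finsum_mem_insert _ (fun ht => htq ht.1)
        (q.support.finite_toSet.subset fun _ hs => hs.1),
      finsum_ncard_bnd_diff_eq_of_isPath hS q hq.of_cons
        (fun u hu => hqS u (List.mem_cons_of_mem _ hu)),
      D.setOf_parent_eq h hq, Set.biUnion_singleton, ← bnd_diff_biUnion_support hS h hq hqS, hB,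
      Set.biUnion_insert, Set.ncard_sdiff_add_ncard _ _ (D.finite_bnd t) hU]
termination_by q.length

theorem finsum_ncard_bnd_diff_eq (hr : D.r ∈ S) (hconn : (D.TG.induce S).Preconnected)
    (hS : D.ExactOn S) {t : D.T} (ht : t ∈ S) :
    (∑ᶠ s ∈ {s | s ∈ S ∧ s ≠ D.r ∧ D.anc s t},
      (D.bnd s \ ⋃ p ∈ {p | D.TG.Adj p s ∧ D.anc p s ∧ p ≠ s}, D.bnd p).ncard) =
    (⋃ s ∈ {s | s ∈ S ∧ D.anc s t}, D.bnd s).ncard := by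
  obtain ⟨q, hq, hqS⟩ := (hconn ⟨t, ht⟩ ⟨D.r, hr⟩).exists_isPath_of_induce
  have hanc : ∀ s, s ∈ S ∧ D.anc s t ↔ s ∈ q.support := fun s => by
    rw [D.anc_iff_mem_support hq]
    exact ⟨And.right, fun hs => ⟨hqS s hs, hs⟩⟩
  have hA : {s | s ∈ S ∧ s ≠ D.r ∧ D.anc s t} = {s | s ∈ q.support ∧ s ≠ D.r} := by
    ext s
    rw [Set.mem_ofPred_eq, Set.mem_ofPred_eq, ← hanc]
    tauto
  have hB : {s | s ∈ S ∧ D.anc s t} = {s | s ∈ q.support} := Set.ext hanc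
  rw [hA, hB]
  exact finsum_ncard_bnd_diff_eq_of_isPath hS q hq hqS

end PreTreeDec

theorem exact_subtree_boundary_connected_general {V : Type*} (G : SimpleGraph V)
    (D : PreTreeDec G) (S : Set D.T) (r' : D.T) (hr' : r' ∈ S)
    (hconn : (D.TG.induce S).Connected)
    (hexact : ∀ s ∈ S, ∀ t ∈ S, D.TG.Adj s t → D.Exact s t) :
    (∀ v : V, ∀ t₁, ∀ h₁ : t₁ ∈ S, ∀ t₂, ∀ h₂ : t₂ ∈ S,
      ∀ hv₁ : v ∈ D.bnd t₁, ∀ hv₂ : v ∈ D.bnd t₂,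
      (D.TG.induce {t | t ∈ S ∧ v ∈ D.bnd t}).Reachable ⟨t₁, h₁, hv₁⟩ ⟨t₂, h₂, hv₂⟩) ∧
    (r' = D.r → ∀ t ∈ S,
      (∑ᶠ s ∈ {s | s ∈ S ∧ s ≠ D.r ∧ D.anc s t},
        Set.ncard (D.bnd s \ ⋃ p ∈ {p | D.TG.Adj p s ∧ D.anc p s ∧ p ≠ s}, D.bnd p)) =
      Set.ncard (⋃ s ∈ {s | s ∈ S ∧ D.anc s t}, D.bnd s)) := by
  refine ⟨fun v t₁ h₁ t₂ h₂ hv₁ hv₂ =>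
    D.preconnected_induce_bnd hconn.preconnected hexact v ⟨t₁, h₁, hv₁⟩ ⟨t₂, h₂, hv₂⟩, ?_⟩
  rintro rfl t ht
  exact D.finsum_ncard_bnd_diff_eq hr' hconn.preconnected hexact ht

/-- Let `(T', r')` be a subtree (a connected set `S` of nodes with
`⪯`-minimal element `r'`) of a pre-tree-decomposition all of whose edges are
exact. Then for every vertex `v` of `G`, the nodes `t ∈ S` with
`v ∈ Δ(π_t)` induce a connected subgraph; and if `r' = r`, then for every
`t ∈ S`, `Σ_{s ∈ S, r ≺ s ⪯ t} |Δ(π_s) \ Δ(π_{p_s})| = |⋃_{s ∈ S, s ⪯ t} Δ(π_s)|`. -/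
theorem exact_subtree_boundary_connected {V : Type*} (G : SimpleGraph V)
    (D : PreTreeDec G) (S : Set D.T) (r' : D.T) (hr' : r' ∈ S)
    (hconn : (D.TG.induce S).Connected)
    (hmin : ∀ t ∈ S, D.anc r' t)
    (hexact : ∀ s ∈ S, ∀ t ∈ S, D.TG.Adj s t → D.Exact s t) :
    (∀ v : V, ∀ t₁, ∀ h₁ : t₁ ∈ S, ∀ t₂, ∀ h₂ : t₂ ∈ S,
      ∀ hv₁ : v ∈ D.bnd t₁, ∀ hv₂ : v ∈ D.bnd t₂,
      (D.TG.induce {t | t ∈ S ∧ v ∈ D.bnd t}).Reachable ⟨t₁, h₁, hv₁⟩ ⟨t₂, h₂, hv₂⟩) ∧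
    (r' = D.r → ∀ t ∈ S,
      (∑ᶠ s ∈ {s | s ∈ S ∧ s ≠ D.r ∧ D.anc s t},
        Set.ncard (D.bnd s \ ⋃ p ∈ {p | D.TG.Adj p s ∧ D.anc p s ∧ p ≠ s}, D.bnd p)) =
      Set.ncard (⋃ s ∈ {s | s ∈ S ∧ D.anc s t}, D.bnd s)) :=
  exact_subtree_boundary_connected_general G D S r' hr' hconn hexact
end

section
/- Let ℓ ≥ 1 and let P_ℓ denote the path with ℓ vertices. In the q-round Cops-and-Robber game with 2 cops on P_ℓ, Robber wins if and only if q ≤ ⌈(ℓ-1)/2⌉. -/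
/-!
Cop wins in `⌊ℓ/2⌋ + 1` rounds: the first cop lands on the middle vertex, and from then on the two
cops leapfrog towards the robber, pushing the blocked end of his segment one vertex per round.

Robber survives `⌊ℓ/2⌋` rounds by keeping, while `q` rounds remain, a cop-free segment `[a, b]`
around himself with `a + q < ℓ` and `q ≤ b`. A cop placed inside the segment is the only new cop,
so the segment stays free of the cops that remain, and the robber runs to whichever side of the
new cop still satisfies the invariant. If the segment is the single vertex being occupied, the
other cop can block only one side of it and the robber steps out through the other.
-/

/-- The path `P_ℓ` with `ℓ` vertices. -/
def pathGraphOn (ℓ : ℕ) : SimpleGraph (Fin ℓ) :=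
  SimpleGraph.fromRel (fun a b => (a : ℕ) + 1 = (b : ℕ))

/-- `u` is reachable from `v` in `G` by a walk avoiding the vertex set `S`. -/
def avoidReach {V : Type*} (G : SimpleGraph V) (S : Finset V) (v u : V) : Prop :=
  Relation.ReflTransGen (fun a b => G.Adj a b ∧ a ∉ S ∧ b ∉ S) v u

/-- `copWin G k q X v`: in the Cops-and-Robber game with `k` cops on `G`,
with cops on `X` and the robber on `v`, Cop (to move) can catch the robber
within `q` further rounds.  Each round Cop announces a new position `X'` of
size at most `k` adding at most one new vertex; Robber then moves within the
component of `G - (X ∩ X')` containing him; Robber is caught when his vertex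
is occupied. -/
def copWin {V : Type*} [DecidableEq V] (G : SimpleGraph V) (k : ℕ) :
    ℕ → Finset V → V → Prop
  | 0, X, v => v ∈ X
  | (q + 1), X, v => v ∈ X ∨ ∃ X' : Finset V, X'.card ≤ k ∧ (X' \ X).card ≤ 1 ∧
      ∀ u, avoidReach G (X ∩ X') v u → copWin G k q X' u

theorem Finset.forall_le_or_forall_ge_of_card_le_two {α : Type*} [LinearOrder α] {s : Finset α}
    (hs : s.card ≤ 2) {w : α} (hw : w ∈ s) : (∀ x ∈ s, x ≤ w) ∨ ∀ x ∈ s, w ≤ x := by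
  by_contra! ⟨⟨x, hx, hwx⟩, ⟨y, hy, hyw⟩⟩
  have : ({y, w, x} : Finset α).card = 3 :=
    Finset.card_eq_three.mpr ⟨y, w, x, hyw.ne, (hyw.trans hwx).ne, hwx.ne, rfl⟩
  have hsub : ({y, w, x} : Finset α) ⊆ s := by simp [Finset.insert_subset_iff, *]
  have := Finset.card_le_card hsub
  omega

section General

variable {V W : Type*} {G : SimpleGraph V} {H : SimpleGraph W}

theorem avoidReach.symm {S : Finset V} {v u : V} (h : avoidReach G S v u) :
    avoidReach G S u v :=
  haveI : Std.Symm fun a b => G.Adj a b ∧ a ∉ S ∧ b ∉ S :=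
    ⟨fun _ _ ⟨hab, ha, hb⟩ => ⟨hab.symm, hb, ha⟩⟩
  Std.Symm.symm (r := Relation.ReflTransGen _) _ _ h

theorem avoidReach.of_map (e : G ≃g H) {S : Finset V} {v u : W}
    (h : avoidReach H (S.map e.toEquiv.toEmbedding) v u) : avoidReach G S (e.symm v) (e.symm u) :=
  h.lift e.symm fun _ _ ⟨hab, ha, hb⟩ =>
    ⟨e.symm.map_adj_iff.mpr hab, Finset.mem_map_equiv.not.mp ha, Finset.mem_map_equiv.not.mp hb⟩

variable [DecidableEq V] [DecidableEq W] {k : ℕ}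

theorem copWin_of_mem {q : ℕ} {X : Finset V} {v : V} (h : v ∈ X) : copWin G k q X v := by
  cases q
  exacts [h, Or.inl h]

theorem copWin.map (e : G ≃g H) {q : ℕ} {X : Finset V} {v : V} (h : copWin G k q X v) :
    copWin H k q (X.map e.toEquiv.toEmbedding) (e v) := by
  induction q generalizing X v with
  | zero => exact Finset.mem_map_of_mem _ h
  | succ q ih =>
    rcases h with h | ⟨X', hcard, hnew, hwin⟩
    · exact Or.inl (Finset.mem_map_of_mem _ h)
    refine Or.inr ⟨X'.map e.toEquiv.toEmbedding, by simpa using hcard, by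
      simpa [← Finset.map_sdiff] using hnew, fun u hu => ?_⟩
    obtain ⟨u, rfl⟩ := e.surjective u
    rw [← Finset.map_inter] at hu
    exact ih (hwin u (by simpa using hu.of_map e))

end General

variable {L : ℕ}

theorem pathGraphOn_adj {x y : Fin L} :
    (pathGraphOn L).Adj x y ↔ (x : ℕ) + 1 = y ∨ (y : ℕ) + 1 = x := by
  simp only [pathGraphOn, SimpleGraph.fromRel_adj, ne_eq, and_iff_right_iff_imp]
  rintro h rfl
  omega

def pathGraphOn.reverse : pathGraphOn L ≃g pathGraphOn L where
  toEquiv := Fin.revPerm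
  map_rel_iff' := by
    intro x y
    simp only [pathGraphOn_adj, Fin.revPerm_apply, Fin.val_rev]
    omega

theorem avoidReach_pathGraphOn_of_forall_notMem_Icc {S : Finset (Fin L)} {lo hi : ℕ}
    (hS : ∀ x ∈ S, (x : ℕ) < lo ∨ hi < x) {v u : Fin L} (hv : (v : ℕ) ∈ Set.Icc lo hi)
    (hu : (u : ℕ) ∈ Set.Icc lo hi) : avoidReach (pathGraphOn L) S v u := by
  have notMem : ∀ x : Fin L, lo ≤ x → x ≤ hi → x ∉ S := fun x h₁ h₂ hx => by
    rcases hS x hx with h | h <;> omega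
  have hlo : lo < L := by have := v.isLt; have := hv.1; omega
  have lo_reaches_add : ∀ n (h : lo + n < L), lo + n ≤ hi →
      avoidReach (pathGraphOn L) S ⟨lo, hlo⟩ ⟨lo + n, h⟩ := by
    intro n
    induction n with
    | zero => exact fun _ _ => .refl
    | succ n ih =>
      refine fun h h' =>
        (ih (by omega) (by omega)).tail ⟨pathGraphOn_adj.mpr (.inl rfl), ?_, ?_⟩ <;>
          exact notMem _ (by simp) (by simp; omega)
  have lo_reaches : ∀ x : Fin L, (x : ℕ) ∈ Set.Icc lo hi →
      avoidReach (pathGraphOn L) S ⟨lo, hlo⟩ x := by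
    rintro x ⟨h₁, h₂⟩
    simpa [Nat.add_sub_cancel' h₁] using
      lo_reaches_add ((x : ℕ) - lo) (by have := x.isLt; omega) (by omega)
  exact (lo_reaches v hv).symm.trans (lo_reaches u hu)

theorem lt_of_avoidReach_pathGraphOn {S : Finset (Fin L)} {j v u : Fin L} (hj : j ∈ S)
    (h : avoidReach (pathGraphOn L) S v u) (hjv : j < v) : j < u := by
  induction h with
  | refl => exact hjv
  | @tail _ c _ step ih =>
    obtain ⟨hadj, -, hc⟩ := step
    have : (j : ℕ) ≠ c := fun he => hc (Fin.ext he ▸ hj)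
    rw [pathGraphOn_adj] at hadj
    rw [Fin.lt_def] at ih ⊢
    omega

theorem copWin_pathGraphOn_of_cop_lt {q : ℕ} {X : Finset (Fin L)} {j v : Fin L} (hj : j ∈ X)
    (hjv : j < v) (hq : L - 1 - j ≤ q) : copWin (pathGraphOn L) 2 q X v := by
  induction q generalizing X j v with
  | zero => have := v.isLt; rw [Fin.lt_def] at hjv; omega
  | succ q ih =>
    have hj' : (j : ℕ) + 1 < L := by have := v.isLt; rw [Fin.lt_def] at hjv; omega
    set j' : Fin L := ⟨j + 1, hj'⟩
    refine Or.inr ⟨{j, j'}, Finset.card_le_two, ?_, fun u hu => ?_⟩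
    · rw [Finset.insert_sdiff_of_mem _ hj]
      exact (Finset.card_le_card Finset.sdiff_subset).trans (Finset.card_singleton _).le
    · have hju : j < u := lt_of_avoidReach_pathGraphOn (by simp [hj]) hu hjv
      rcases eq_or_ne u j' with rfl | hne
      · exact copWin_of_mem (by simp)
      · have hj'u : j' < u := by
          have := Fin.val_ne_of_ne hne
          simp only [Fin.lt_def, j'] at hju this ⊢
          omega
        exact ih (by simp) hj'u (by simp [j']; omega)

theorem copWin_pathGraphOn_of_lt_cop {q : ℕ} {X : Finset (Fin L)} {j v : Fin L} (hj : j ∈ X)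
    (hvj : v < j) (hq : (j : ℕ) ≤ q) : copWin (pathGraphOn L) 2 q X v := by
  let e : pathGraphOn L ≃g pathGraphOn L := pathGraphOn.reverse
  have := copWin.map e <| copWin_pathGraphOn_of_cop_lt (q := q)
    (Finset.mem_map_of_mem e.toEquiv.toEmbedding hj) (Fin.rev_lt_rev.mpr hvj)
    (by simp [e, pathGraphOn.reverse]; omega)
  simpa [Finset.map_eq_image, Finset.image_image, Function.comp_def, e, pathGraphOn.reverse]
    using this

theorem copWin_pathGraphOn_empty {q : ℕ} (hq : L / 2 ≤ q) (v : Fin L) :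
    copWin (pathGraphOn L) 2 (q + 1) ∅ v := by
  have := v.pos
  let m : Fin L := ⟨(L - 1) / 2, by omega⟩
  refine Or.inr ⟨{m}, by simp, by simp, fun u _ => ?_⟩
  rcases lt_trichotomy u m with h | rfl | h
  · exact copWin_pathGraphOn_of_lt_cop (Finset.mem_singleton_self m) h (by simp [m]; omega)
  · exact copWin_of_mem (Finset.mem_singleton_self _)
  · exact copWin_pathGraphOn_of_cop_lt (Finset.mem_singleton_self m) h (by simp [m]; omega)

def IsHaven (q : ℕ) (X : Finset (Fin L)) (v : Fin L) : Prop :=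
  ∃ a b : ℕ, a ≤ v ∧ (v : ℕ) ≤ b ∧ (∀ x ∈ X, (x : ℕ) < a ∨ b < x) ∧ a + q < L ∧ q ≤ b

theorem IsHaven.notMem {q : ℕ} {X : Finset (Fin L)} {v : Fin L} (hv : IsHaven q X v) : v ∉ X :=
  fun hvX => by
    obtain ⟨a, b, hav, hvb, hfree, -⟩ := hv
    rcases hfree v hvX with h | h <;> omega

theorem exists_avoidReach_isHaven_of_mem {q : ℕ} {X X' : Finset (Fin L)} {w : Fin L}
    (hwX' : w ∈ X') (hwX : w ∉ X) (hcard : X'.card ≤ 2) (hleft : q + 1 ≤ (w : ℕ))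
    (hright : (w : ℕ) + q + 2 ≤ L) :
    ∃ u, avoidReach (pathGraphOn L) (X ∩ X') w u ∧ IsHaven q X' u := by
  have hw : w ∉ X ∩ X' := fun h => hwX (Finset.mem_inter.mp h).1
  rcases Finset.forall_le_or_forall_ge_of_card_le_two hcard hwX' with hle | hge
  · refine ⟨⟨w + 1, by omega⟩, .single ⟨pathGraphOn_adj.mpr (.inl rfl), hw, fun h => ?_⟩,
      w + 1, L - 1, le_rfl, by simp; omega, fun x hx => .inl ?_, by omega, by omega⟩
    · exact absurd (hle _ (Finset.mem_inter.mp h).2) (by simp [Fin.le_def])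
    · have := Fin.le_def.mp (hle x hx); omega
  · refine ⟨⟨w - 1, by omega⟩, .single ⟨pathGraphOn_adj.mpr (.inr ?_), hw, fun h => ?_⟩,
      0, w - 1, by simp, by simp, fun x hx => .inr ?_, by omega, by omega⟩
    · simp; omega
    · exact absurd (hge _ (Finset.mem_inter.mp h).2) (by simp [Fin.le_def]; omega)
    · have := Fin.le_def.mp (hge x hx); omega

theorem IsHaven.exists_avoidReach {q : ℕ} {X X' : Finset (Fin L)} {v : Fin L}
    (hv : IsHaven (q + 1) X v) (hL : 2 * (q + 1) ≤ L) (hcard : X'.card ≤ 2)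
    (hnew : (X' \ X).card ≤ 1) :
    ∃ u, avoidReach (pathGraphOn L) (X ∩ X') v u ∧ IsHaven q X' u := by
  obtain ⟨a, b, hav, hvb, hfree, ha, hb⟩ := hv
  by_cases hw : ∃ w ∈ X', a ≤ (w : ℕ) ∧ (w : ℕ) ≤ b
  swap
  · push Not at hw
    exact ⟨v, .refl, a, b, hav, hvb, fun x hx => by have := hw x hx; omega, by omega, by omega⟩
  obtain ⟨w, hwX', haw, hwb⟩ := hw
  have notMem_X : ∀ x : Fin L, a ≤ (x : ℕ) → (x : ℕ) ≤ b → x ∉ X := fun x h₁ h₂ hx => by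
    rcases hfree x hx with h | h <;> omega
  have cops_X' : ∀ x ∈ X', x = w ∨ (x : ℕ) < a ∨ b < x := fun x hx => by
    by_cases hx' : a ≤ (x : ℕ) ∧ (x : ℕ) ≤ b
    · exact .inl <| Finset.card_le_one.mp hnew x
        (Finset.mem_sdiff.mpr ⟨hx, notMem_X x hx'.1 hx'.2⟩) w
        (Finset.mem_sdiff.mpr ⟨hwX', notMem_X w haw hwb⟩)
    · omega
  have reach : ∀ u : Fin L, a ≤ (u : ℕ) → (u : ℕ) ≤ b → avoidReach (pathGraphOn L) (X ∩ X') v u :=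
    fun u h₁ h₂ => avoidReach_pathGraphOn_of_forall_notMem_Icc
      (fun x hx => hfree x (Finset.mem_inter.mp hx).1) ⟨hav, hvb⟩ ⟨h₁, h₂⟩
  by_cases right : (w : ℕ) < b ∧ (w : ℕ) + q + 2 ≤ L
  · refine ⟨⟨w + 1, by omega⟩, reach _ (by simp; omega) (by simp; omega), w + 1, b, le_rfl,
      by simp; omega, fun x hx => ?_, by omega, by omega⟩
    rcases cops_X' x hx with rfl | h | h <;> omega
  by_cases left : a < (w : ℕ) ∧ q + 1 ≤ (w : ℕ)
  · refine ⟨⟨w - 1, by omega⟩, reach _ (by simp; omega) (by simp; omega), a, w - 1,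
      by simp; omega, le_rfl, fun x hx => ?_, by omega, by omega⟩
    rcases cops_X' x hx with rfl | h | h <;> omega
  obtain rfl : w = v := Fin.ext (by omega)
  exact exists_avoidReach_isHaven_of_mem hwX' (notMem_X w haw hwb) hcard (by omega) (by omega)

theorem not_copWin_of_isHaven {q : ℕ} {X : Finset (Fin L)} {v : Fin L} (hv : IsHaven q X v)
    (hL : 2 * q ≤ L) : ¬ copWin (pathGraphOn L) 2 q X v := by
  induction q generalizing X v with
  | zero => exact hv.notMem
  | succ q ih =>
    rintro (hvX | ⟨X', hcard, hnew, hwin⟩)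
    · exact hv.notMem hvX
    obtain ⟨u, hu, hsafe⟩ := hv.exists_avoidReach hL hcard hnew
    exact ih hsafe (by omega) (hwin u hu)

/-- On the path with `ℓ ≥ 1` vertices, Robber wins the `q`-round
Cops-and-Robber game against 2 cops iff `q ≤ ⌈(ℓ-1)/2⌉`. -/
theorem robber_wins_path_iff (ℓ : ℕ) (hℓ : 1 ≤ ℓ) (q : ℕ) :
    (∃ v : Fin ℓ, ¬ copWin (pathGraphOn ℓ) 2 q ∅ v) ↔ q ≤ ((ℓ - 1) + 1) / 2 := by
  rw [Nat.sub_add_cancel hℓ]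
  constructor
  · rintro ⟨v, hv⟩
    by_contra! hq
    obtain ⟨q, rfl⟩ : ∃ r, q = r + 1 := ⟨q - 1, by omega⟩
    exact hv (copWin_pathGraphOn_empty (by omega) v)
  · intro hq
    have hsafe : IsHaven q (∅ : Finset (Fin ℓ)) ⟨0, hℓ⟩ :=
      ⟨0, ℓ - 1, le_rfl, Nat.zero_le _, by simp, by omega, by omega⟩
    exact ⟨⟨0, hℓ⟩, not_copWin_of_isHaven hsafe (by omega)⟩
end

section
/- For every graph G and k, q ≥ 1: if G admits a k-pebble forest cover of depth at most q, then G has treewidth at most k-1 and treedepth at most q. -/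
/-- A tree-decomposition of a graph `G`. -/
structure TreeDecomp {V : Type*} (G : SimpleGraph V) where
  T : Type
  TFin : Fintype T
  TG : SimpleGraph T
  isTree : TG.IsTree
  bag : T → Set V
  coversVerts : ∀ v : V, ∃ t, v ∈ bag t
  coversEdges : ∀ u v : V, G.Adj u v → ∃ t, u ∈ bag t ∧ v ∈ bag t
  bagsConnected : ∀ v : V, (TG.induce {t | v ∈ bag t}).Connected

/-- A forest order: a partial order whose down-sets are chains. -/
def ForestOrder {V : Type*} (le : V → V → Prop) : Prop :=
  (∀ v, le v v) ∧ (∀ u v, le u v → le v u → u = v) ∧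
  (∀ u v w, le u v → le v w → le u w) ∧
  (∀ u v w, le u w → le v w → (le u v ∨ le v u))

/-- A forest cover of `G`. -/
def IsForestCover {V : Type*} (G : SimpleGraph V) (le : V → V → Prop) : Prop :=
  ForestOrder le ∧ ∀ u v, G.Adj u v → (le u v ∨ le v u)

/-!
Hang every vertex below its immediate predecessor in the forest order and attach the roots of
the forest to one extra root `none`; since the depth strictly decreases towards the root, this
is a tree. Put into the bag of `v` those ancestors `u` of `v` whose pebble is not reused on the
path from `u` up to `v`. A bag lies on a chain, so its members carry distinct pebbles and it
has at most `k` elements; (FC.2) puts the lower end of every edge into the bag of its upper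
end; and if `u ≠ v` is in the bag of `v`, it is also in the bag of the parent of `v`, so the
bags containing `u` form a path ending at `u`. The forest itself witnesses treedepth `≤ q`.
-/

open SimpleGraph

section ParentGraph

variable {W : Type*}

def parentGraph (par : W → Option W) : SimpleGraph (Option W) :=
  fromEdgeSet (Set.range fun v => s(par v, some v))

variable {par : W → Option W} {ℓ : W → ℕ}

lemma parent_ne_some (hℓ : ∀ v u, par v = some u → ℓ u < ℓ v) (v : W) :
    par v ≠ some v :=
  fun h => (hℓ v v h).false

lemma edgeSet_parentGraph (hℓ : ∀ v u, par v = some u → ℓ u < ℓ v) :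
    (parentGraph par).edgeSet = Set.range fun v => s(par v, some v) := by
  rw [parentGraph, edgeSet_fromEdgeSet, sdiff_eq_left, Set.disjoint_left]
  rintro _ ⟨v, rfl⟩
  simpa using parent_ne_some hℓ v

lemma parentGraph_adj (hℓ : ∀ v u, par v = some u → ℓ u < ℓ v) (v : W) :
    (parentGraph par).Adj (par v) (some v) := by
  rw [parentGraph, fromEdgeSet_adj]
  exact ⟨⟨v, rfl⟩, parent_ne_some hℓ v⟩

lemma injective_parentEdge (hℓ : ∀ v u, par v = some u → ℓ u < ℓ v) :
    Function.Injective fun v => s(par v, some v) := by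
  intro v w h
  rcases Sym2.eq_iff.1 h with ⟨-, hvw⟩ | ⟨hv, hw⟩
  · exact Option.some_injective _ hvw
  · exact absurd (hℓ w v hw.symm) (hℓ v w hv).asymm

lemma induce_parentGraph_reachable (hℓ : ∀ v u, par v = some u → ℓ u < ℓ v)
    {S : Set (Option W)} {a : Option W} (ha : a ∈ S)
    (hS : ∀ t ∈ S, t ≠ a → ∃ v, t = some v ∧ par v ∈ S) (t : Option W)
    (ht : t ∈ S) : ((parentGraph par).induce S).Reachable ⟨t, ht⟩ ⟨a, ha⟩ := by
  induction hn : t.elim 0 (ℓ · + 1) using Nat.strong_induction_on generalizing t with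
  | _ n ih =>
    by_cases hta : t = a
    · subst hta; rfl
    obtain ⟨v, rfl, hpar⟩ := hS t ht hta
    have hadj : ((parentGraph par).induce S).Adj ⟨some v, ht⟩ ⟨par v, hpar⟩ :=
      (parentGraph_adj hℓ v).symm
    refine hadj.reachable.trans (ih _ ?_ _ hpar rfl)
    subst hn
    cases hp : par v with
    | none => simp
    | some u => simpa using hℓ v u hp

lemma induce_parentGraph_connected (hℓ : ∀ v u, par v = some u → ℓ u < ℓ v)
    {S : Set (Option W)} {a : Option W} (ha : a ∈ S)
    (hS : ∀ t ∈ S, t ≠ a → ∃ v, t = some v ∧ par v ∈ S) :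
    ((parentGraph par).induce S).Connected := by
  rw [connected_iff_exists_forall_reachable]
  exact ⟨⟨a, ha⟩, fun ⟨t, ht⟩ => (induce_parentGraph_reachable hℓ ha hS t ht).symm⟩

lemma parentGraph_connected (hℓ : ∀ v u, par v = some u → ℓ u < ℓ v) :
    (parentGraph par).Connected := by
  rw [connected_iff_exists_forall_reachable]
  refine ⟨none, fun t => ?_⟩
  have hS : ∀ t ∈ (Set.univ : Set (Option W)), t ≠ none →
      ∃ v, t = some v ∧ par v ∈ Set.univ := by
    rintro (_ | v) - hv
    exacts [absurd rfl hv, ⟨v, rfl, trivial⟩]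
  exact ((induce_parentGraph_reachable hℓ (Set.mem_univ none) hS t (Set.mem_univ t)).map
    (Embedding.induce Set.univ).toHom).symm

lemma parentGraph_isTree [Finite W] (hℓ : ∀ v u, par v = some u → ℓ u < ℓ v) :
    (parentGraph par).IsTree := by
  rw [isTree_iff_connected_and_card, edgeSet_parentGraph hℓ,
    Nat.card_range_of_injective (injective_parentEdge hℓ), Finite.card_option]
  exact ⟨parentGraph_connected hℓ, rfl⟩

end ParentGraph

/-- Transfers a tree-decomposition indexed by an arbitrary finite type to one indexed by
`Fin n`, as `TreeDecomp` requires its index type to live in `Type`. -/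
noncomputable def TreeDecomp.ofTree {V T : Type*} [Finite T] {G : SimpleGraph V}
    (H : SimpleGraph T) (hH : H.IsTree) (bag : T → Set V)
    (coversVerts : ∀ v, ∃ t, v ∈ bag t)
    (coversEdges : ∀ u v, G.Adj u v → ∃ t, u ∈ bag t ∧ v ∈ bag t)
    (bagsConnected : ∀ v, (H.induce {t | v ∈ bag t}).Connected) : TreeDecomp G :=
  let e := (Finite.equivFin T).symm
  { T := Fin (Nat.card T)
    TFin := inferInstance
    TG := H.comap e
    isTree := (Iso.comap e H).isTree_iff.2 hH
    bag := bag ∘ e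
    coversVerts := fun v => by
      obtain ⟨t, ht⟩ := coversVerts v
      exact ⟨e.symm t, by simpa using ht⟩
    coversEdges := fun u v huv => by
      obtain ⟨t, hu, hv⟩ := coversEdges u v huv
      exact ⟨e.symm t, by simpa using hu, by simpa using hv⟩
    bagsConnected := fun v => by
      refine (bagsConnected v).map (induceHom (Iso.comap e H).symm.toHom fun t ht => ?_) ?_
      · simpa using ht
      · rintro ⟨t, ht⟩
        exact ⟨⟨e t, ht⟩, Subtype.ext (e.symm_apply_apply t)⟩ }

def IsParent {V : Type*} (le : V → V → Prop) (u v : V) : Prop :=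
  le u v ∧ u ≠ v ∧ ∀ x, le x v → x ≠ v → le x u

open Classical in
noncomputable def parent {V : Type*} (le : V → V → Prop) (v : V) : Option V :=
  if h : ∃ u, IsParent le u v then some h.choose else none

lemma isParent_of_parent_eq_some {V : Type*} {le : V → V → Prop} {u v : V}
    (h : parent le v = some u) : IsParent le u v := by
  unfold parent at h
  split_ifs at h with hex
  exact Option.some_injective _ h ▸ hex.choose_spec

def pebbleBag {V α : Type*} (le : V → V → Prop) (p : V → α) : Option V → Set V
  | none => ∅
  | some v => {u | le u v ∧ ∀ w, le u w → le w v → w ≠ u → p w ≠ p u}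

namespace ForestOrder

variable {V : Type*} {le : V → V → Prop}

lemma ncard_lt_ncard [Finite V] (hfo : ForestOrder le) {u v : V} (huv : le u v) (hne : u ≠ v) :
    Set.ncard {x | le x u} < Set.ncard {x | le x v} := by
  refine Set.ncard_lt_ncard ⟨fun x hx => hfo.2.2.1 x u v hx huv, fun hsub => ?_⟩
  exact hne (hfo.2.1 u v huv (hsub (hfo.1 v)))

lemma exists_isParent [Finite V] (hfo : ForestOrder le) {u v : V} (huv : le u v)
    (hne : u ≠ v) : ∃ w, IsParent le w v := by
  obtain ⟨w, ⟨hwv, hwne⟩, hmax⟩ := Set.Finite.exists_maximalFor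
    (fun x => Set.ncard {y | le y x}) {x | le x v ∧ x ≠ v} (Set.toFinite _) ⟨u, huv, hne⟩
  -- The strict ancestors of `v` form a chain, so one of maximal depth lies above all others.
  refine ⟨w, hwv, hwne, fun x hxv hxne => ?_⟩
  rcases hfo.2.2.2 x w v hxv hwv with hxw | hwx
  · exact hxw
  · by_cases hx : w = x
    · exact hx ▸ hfo.1 w
    · have hlt := hfo.ncard_lt_ncard hwx hx
      exact absurd (hmax ⟨hxv, hxne⟩ hlt.le) hlt.not_ge

lemma parent_eq_some [Finite V] (hfo : ForestOrder le) {u v : V} (huv : le u v)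
    (hne : u ≠ v) : ∃ w, parent le v = some w ∧ IsParent le w v := by
  have hex := hfo.exists_isParent huv hne
  exact ⟨hex.choose, by simp [parent, hex], hex.choose_spec⟩

variable {α : Type*} {p : V → α}

lemma mem_pebbleBag_self (hfo : ForestOrder le) (v : V) : v ∈ pebbleBag le p (some v) :=
  ⟨hfo.1 v, fun w hvw hwv hne => absurd (hfo.2.1 w v hwv hvw) hne⟩

lemma mem_pebbleBag_of_isParent (hfo : ForestOrder le) {u v w : V}
    (hu : u ∈ pebbleBag le p (some v)) (hwv : IsParent le w v) (hne : u ≠ v) :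
    u ∈ pebbleBag le p (some w) :=
  ⟨hwv.2.2 u hu.1 hne, fun x hux hxw => hu.2 x hux (hfo.2.2.1 x w v hxw hwv.1)⟩

lemma ncard_pebbleBag_le [Finite α] (hfo : ForestOrder le) (t : Option V) :
    (pebbleBag le p t).ncard ≤ Nat.card α := by
  cases t with
  | none => simp [pebbleBag]
  | some v =>
    have hinj : Set.InjOn p (pebbleBag le p (some v)) := by
      intro a ha b hb hab
      by_contra hne
      rcases hfo.2.2.2 a b v ha.1 hb.1 with hab' | hba
      · exact ha.2 b hab' hb.1 (Ne.symm hne) hab.symm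
      · exact hb.2 a hba ha.1 hne hab
    rw [← hinj.ncard_image]
    exact Set.ncard_le_card _

end ForestOrder

theorem ForestOrder.exists_treeDecomp_ncard_bag_le {V α : Type*} [Finite V] [Finite α]
    {G : SimpleGraph V} {le : V → V → Prop} (hfo : ForestOrder le) (p : V → α)
    (hedge : ∀ u v, G.Adj u v → le u v ∨ le v u)
    (hpeb : ∀ u v, G.Adj u v → le u v → u ≠ v →
      ∀ w, le u w → u ≠ w → le w v → p u ≠ p w) :
    ∃ D : TreeDecomp G, ∀ t, (D.bag t).ncard ≤ Nat.card α := by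
  have hℓ (v u : V) (h : parent le v = some u) :
      Set.ncard {x | le x u} < Set.ncard {x | le x v} :=
    hfo.ncard_lt_ncard (isParent_of_parent_eq_some h).1 (isParent_of_parent_eq_some h).2.1
  refine ⟨TreeDecomp.ofTree (parentGraph (parent le)) (parentGraph_isTree hℓ) (pebbleBag le p)
    (fun v => ⟨some v, hfo.mem_pebbleBag_self v⟩) ?_ ?_, fun t => hfo.ncard_pebbleBag_le _⟩
  · intro u v huv
    wlog h : le u v generalizing u v
    · obtain ⟨t, hv, hu⟩ := this v u huv.symm ((hedge u v huv).resolve_left h)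
      exact ⟨t, hu, hv⟩
    refine ⟨some v, ⟨h, fun w huw hwv hwu => ?_⟩, hfo.mem_pebbleBag_self v⟩
    exact (hpeb u v huv h huv.ne w huw (Ne.symm hwu) hwv).symm
  · intro u
    refine induce_parentGraph_connected hℓ (a := some u) (hfo.mem_pebbleBag_self u) ?_
    rintro (_ | v) hv hne
    · exact hv.elim
    · have huv : u ≠ v := fun h => hne (h ▸ rfl)
      obtain ⟨w, hw, hwv⟩ := hfo.parent_eq_some hv.1 huv
      exact ⟨v, rfl, hw ▸ hfo.mem_pebbleBag_of_isParent hv hwv huv⟩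

theorem pebble_forest_cover_tw_td_general {V : Type*} [Fintype V] (G : SimpleGraph V)
    (k q : ℕ)
    (le : V → V → Prop) (p : V → Fin k)
    (hfo : ForestOrder le)
    (hedge : ∀ u v, G.Adj u v → le u v ∨ le v u)
    (hpeb : ∀ u v, G.Adj u v → le u v → u ≠ v →
      ∀ w, le u w → u ≠ w → le w v → p u ≠ p w)
    (hdepth : ∀ v : V, Set.ncard {u | le u v} ≤ q) :
    (∃ D : TreeDecomp G, ∀ t : D.T, Set.ncard (D.bag t) ≤ k) ∧
    (∃ le' : V → V → Prop, IsForestCover G le' ∧ ∀ v : V, Set.ncard {u | le' u v} ≤ q) := by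
  refine ⟨?_, le, ⟨hfo, hedge⟩, hdepth⟩
  simpa using hfo.exists_treeDecomp_ncard_bag_le p hedge hpeb

/-- If `G` admits a `k`-pebble forest cover of depth at most `q` — a forest
order `le` on `V(G)` with a pebbling `p : V(G) → [k]` satisfying
(FC.1): every edge connects comparable vertices, and
(FC.2): if `uv ∈ E(G)` with `u ≺ v` then `p(u) ≠ p(w)` for all `u ≺ w ⪯ v`,
of depth at most `q` (every vertex has at most `q` ancestors, itself
included) — then `G` has treewidth at most `k-1` (a tree-decomposition with
bags of size at most `k`) and treedepth at most `q` (a forest cover of depth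
at most `q`). -/
theorem pebble_forest_cover_tw_td {V : Type*} [Fintype V] (G : SimpleGraph V)
    (k q : ℕ) (hk : 1 ≤ k) (hq : 1 ≤ q)
    (le : V → V → Prop) (p : V → Fin k)
    (hfo : ForestOrder le)
    (hedge : ∀ u v, G.Adj u v → le u v ∨ le v u)
    (hpeb : ∀ u v, G.Adj u v → le u v → u ≠ v →
      ∀ w, le u w → u ≠ w → le w v → p u ≠ p w)
    (hdepth : ∀ v : V, Set.ncard {u | le u v} ≤ q) :
    (∃ D : TreeDecomp G, ∀ t : D.T, Set.ncard (D.bag t) ≤ k) ∧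
    (∃ le' : V → V → Prop, IsForestCover G le' ∧ ∀ v : V, Set.ncard {u | le' u v} ≤ q) :=
  pebble_forest_cover_tw_td_general G k q le p hfo hedge hpeb hdepth
end
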